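/- arXiv:0804.2910 — 7 statements merged into one kernel-verified Lean document; each statement's English description precedes it below -/
import Mathlib

section
/- For every d ≥ 2 and every integer k ≥ 1, the simplex S_d(k) ⊂ ℝ^d is a clean lattice d-simplex (the only lattice points on its boundary are its d+1 vertices), and its topological interior contains exactly k lattice points, namely the points −i·(e_1 + ⋯ + e_d) for i = 0, 1, …, k−1. -/
open MeasureTheory Set
open scoped ENNReal

noncomputable section

/-- A point of `ℝ^d` is a lattice point if all its coordinates are integers. -/
def IsLatticePt (d : ℕ) (x : Fin d → ℝ) : Prop := ∀ i, ∃ z : ℤ, x i = (z : ℝ)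

/-- A lattice `d`-simplex: the convex hull of `d+1` affinely independent points of `ℤ^d`. -/
def IsLatticeSimplex (d : ℕ) (T : Set (Fin d → ℝ)) : Prop :=
  ∃ v : Fin (d + 1) → Fin d → ℤ,
    AffineIndependent ℝ (fun i => fun j => ((v i j : ℤ) : ℝ)) ∧
    T = convexHull ℝ (Set.range (fun i => fun j => ((v i j : ℤ) : ℝ)))

/-- A lattice `d`-polytope: convex hull of a finite set of lattice points affinely
spanning `ℝ^d`. -/
def IsLatticePolytope (d : ℕ) (P : Set (Fin d → ℝ)) : Prop :=
  ∃ F : Finset (Fin d → ℤ),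
    affineSpan ℝ ((fun v : Fin d → ℤ => fun j : Fin d => (v j : ℝ)) '' ↑F) = ⊤ ∧
    P = convexHull ℝ ((fun v : Fin d → ℤ => fun j : Fin d => (v j : ℝ)) '' ↑F)

/-- Clean: the only lattice points on the boundary are the vertices (extreme points). -/
def IsClean (d : ℕ) (P : Set (Fin d → ℝ)) : Prop :=
  frontier P ∩ {x | IsLatticePt d x} = Set.extremePoints ℝ P

/-- Unimodular equivalence of subsets of `ℝ^d`. -/
def UnimodEquiv (d : ℕ) (P Q : Set (Fin d → ℝ)) : Prop :=
  ∃ (M : Matrix (Fin d) (Fin d) ℤ) (u : Fin d → ℤ),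
    (M.det = 1 ∨ M.det = -1) ∧
    (fun x => (M.map (fun z : ℤ => (z : ℝ))).mulVec x + (fun i => (u i : ℝ))) '' P = Q

/-- `S_d(k) = conv(e_1, …, e_d, -k(e_1 + ⋯ + e_d))`. -/
def Sdk (d k : ℕ) : Set (Fin d → ℝ) :=
  convexHull ℝ
    ((Set.range fun i : Fin d => (Pi.single i 1 : Fin d → ℝ)) ∪ {fun _ => -(k : ℝ)})

/-- `T_{a_1,…,a_d}`: vertex set `{0, e_1, …, e_{d-1}, (a_1,…,a_d)}`. -/
def Ta (d : ℕ) (a : Fin d → ℤ) : Set (Fin d → ℝ) :=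
  convexHull ℝ
    ({(0 : Fin d → ℝ)} ∪
      {x | ∃ i : Fin d, i.val < d - 1 ∧ x = (Pi.single i 1 : Fin d → ℝ)} ∪
      {fun i => (a i : ℝ)})

/-
The vertices of `S_d(k)` form an affine basis of `ℝ^d`, and `d k + 1` times the barycentric
coordinates of `x` are the integral affine forms `(d k + 1) x_i + k (1 - Σ x)` and `1 - Σ x`.
So `S_d(k)` is a simplex whose extreme points are its vertices and whose interior is cut out by
strict inequalities. For a lattice point with coordinate sum `s ≤ 1`: if `s = 1` the forms say
all coordinates are nonnegative, giving a unit vector; if `s ≤ 0` they force every coordinate to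
be at least the mean `s / d`, so the point lies on the diagonal, at `-n (e_1 + ⋯ + e_d)` with
`0 ≤ n ≤ k`, which is interior exactly when `n < k`.
-/

theorem AffineBasis.eq_of_coord_eq_zero {ι k V P : Type*} [Fintype ι] [Ring k] [AddCommGroup V]
    [Module k V] [AddTorsor V P] (b : AffineBasis ι k P) {i : ι} {x : P}
    (h : ∀ j ≠ i, b.coord j x = 0) : x = b i := by
  classical
  refine b.ext_elem fun j => ?_
  by_cases hji : j = i
  · subst hji
    rw [b.coord_apply_eq, ← b.sum_coord_apply_eq_one x,
      Finset.sum_eq_single j (fun l _ hl => h l hl) (by simp)]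
  · rw [h j hji, b.coord_apply_ne hji]

theorem AffineBasis.extremePoints_convexHull {ι 𝕜 E : Type*} [Fintype ι] [Field 𝕜] [LinearOrder 𝕜]
    [IsStrictOrderedRing 𝕜] [AddCommGroup E] [Module 𝕜 E] (b : AffineBasis ι 𝕜 E) :
    (convexHull 𝕜 (range b)).extremePoints 𝕜 = range b := by
  refine extremePoints_convexHull_subset.antisymm ?_
  rintro _ ⟨i, rfl⟩
  refine ⟨subset_convexHull 𝕜 _ ⟨i, rfl⟩, fun x hx y hy ⟨a, c, ha, hc, hac, hxy⟩ => ?_⟩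
  rw [b.convexHull_eq_nonneg_coord] at hx hy
  refine b.eq_of_coord_eq_zero fun j hj => ?_
  have h := congrArg (b.coord j) hxy
  rw [Convex.combo_affine_apply hac, b.coord_apply_ne hj, smul_eq_mul, smul_eq_mul] at h
  nlinarith [mul_nonneg ha.le (hx j), mul_nonneg hc.le (hy j), hx j]

theorem AffineBasis.notMem_interior_convexHull {ι E : Type*} [Finite ι] [Nontrivial ι]
    [NormedAddCommGroup E] [NormedSpace ℝ E] (b : AffineBasis ι ℝ E) (i : ι) :
    b i ∉ interior (convexHull ℝ (range b)) := by
  rw [b.interior_convexHull]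
  obtain ⟨j, hj⟩ := exists_ne i
  exact fun h => (h j).ne' (b.coord_apply_ne hj)

theorem card_mul_eq_sum_of_forall_sum_le {ι R : Type*} [Fintype ι] [CommRing R] [PartialOrder R]
    [IsOrderedRing R] (f : ι → R) (h : ∀ i, ∑ j, f j ≤ Fintype.card ι * f i) (i : ι) :
    Fintype.card ι * f i = ∑ j, f j :=
  ((Finset.sum_eq_sum_iff_of_le fun i (_ : i ∈ Finset.univ) => h i).1
    (by simp [Finset.mul_sum]) i (Finset.mem_univ i)).symm

theorem exists_eq_single_of_nonneg_of_sum_eq_one {ι : Type*} [Fintype ι] [DecidableEq ι]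
    {z : ι → ℤ} (h0 : ∀ i, 0 ≤ z i) (h1 : ∑ i, z i = 1) : ∃ i, z = Pi.single i 1 := by
  obtain ⟨i, -, hi⟩ := Finset.exists_ne_zero_of_sum_ne_zero (h1 ▸ one_ne_zero)
  have hzero : ∀ j ≠ i, z j = 0 := by
    intro j hj
    have := Finset.sum_le_sum_of_subset_of_nonneg (Finset.subset_univ {i, j}) fun l _ _ => h0 l
    rw [Finset.sum_pair hj.symm, h1] at this
    have hj0 := h0 j
    have hi0 := h0 i
    omega
  have hone : z i = 1 := by
    rw [← h1, Finset.sum_eq_single i (fun j _ hj => hzero j hj) (by simp)]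
  refine ⟨i, funext fun j => ?_⟩
  rcases eq_or_ne j i with rfl | hj
  · simp [hone]
  · simp [hzero j hj, hj]

namespace Sdk

def vertex (d k : ℕ) : Fin (d + 1) → Fin d → ℤ :=
  Fin.snoc (fun i => Pi.single i 1) (fun _ => -(k : ℤ))

def realVertex (d k : ℕ) (i : Fin (d + 1)) : Fin d → ℝ := fun j => (vertex d k i j : ℝ)

@[simp]
theorem realVertex_castSucc (d k : ℕ) (i : Fin d) :
    realVertex d k i.castSucc = Pi.single i 1 := by
  ext j
  simp [realVertex, vertex, Pi.single_apply, apply_ite (Int.cast : ℤ → ℝ)]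

@[simp]
theorem realVertex_last (d k : ℕ) : realVertex d k (Fin.last d) = fun _ => -(k : ℝ) := by
  ext j
  simp [realVertex, vertex]

theorem range_realVertex (d k : ℕ) : range (realVertex d k) =
    (range fun i : Fin d => (Pi.single i 1 : Fin d → ℝ)) ∪ {fun _ => -(k : ℝ)} := by
  ext x
  simp only [mem_range, Fin.exists_fin_succ', realVertex_castSucc, realVertex_last, mem_union,
    mem_singleton_iff, eq_comm (b := x)]

theorem eq_convexHull (d k : ℕ) : Sdk d k = convexHull ℝ (range (realVertex d k)) := by
  rw [range_realVertex, Sdk]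

/-- `d * k + 1` times the barycentric coordinates of `x` with respect to `realVertex d k`;
the last one belongs to the apex `-k (e_1 + ⋯ + e_d)`. -/
def scaledBaryCoord (d k : ℕ) (x : Fin d → ℝ) : Fin (d + 1) → ℝ :=
  Fin.snoc (fun i => (d * k + 1) * x i + k * (1 - ∑ j, x j)) (1 - ∑ j, x j)

theorem sum_scaledBaryCoord_div (d k : ℕ) (x : Fin d → ℝ) :
    ∑ i, scaledBaryCoord d k x i / (d * k + 1) = 1 := by
  rw [← Finset.sum_div, div_eq_one_iff_eq (by positivity)]
  simp only [scaledBaryCoord, Fin.sum_univ_castSucc, Fin.snoc_castSucc, Fin.snoc_last,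
    Finset.sum_add_distrib, ← Finset.mul_sum, Finset.sum_const, Finset.card_univ,
    Fintype.card_fin, nsmul_eq_mul]
  ring

theorem affineCombination_scaledBaryCoord (d k : ℕ) (x : Fin d → ℝ) :
    Finset.univ.affineCombination ℝ (realVertex d k)
      (fun i => scaledBaryCoord d k x i / (d * k + 1)) = x := by
  rw [Finset.affineCombination_eq_linear_combination _ _ _ (sum_scaledBaryCoord_div d k x)]
  ext j
  simp [Fin.sum_univ_castSucc, scaledBaryCoord, Pi.single_apply]
  field_simp
  ring

theorem affineSpan_range_realVertex (d k : ℕ) : affineSpan ℝ (range (realVertex d k)) = ⊤ := by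
  refine eq_top_iff.2 fun x _ => ?_
  rw [← affineCombination_scaledBaryCoord d k x]
  exact affineCombination_mem_affineSpan (sum_scaledBaryCoord_div d k x) _

theorem affineIndependent_realVertex (d k : ℕ) : AffineIndependent ℝ (realVertex d k) := by
  rw [affineIndependent_iff_le_finrank_vectorSpan ℝ _ (Fintype.card_fin (d + 1)),
    ← direction_affineSpan, affineSpan_range_realVertex, AffineSubspace.direction_top,
    finrank_top, Module.finrank_fin_fun]

def affineBasis (d k : ℕ) : AffineBasis (Fin (d + 1)) ℝ (Fin d → ℝ) :=
  ⟨realVertex d k, affineIndependent_realVertex d k, affineSpan_range_realVertex d k⟩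

theorem coe_affineBasis (d k : ℕ) : ⇑(affineBasis d k) = realVertex d k := rfl

theorem coord_affineBasis (d k : ℕ) (i : Fin (d + 1)) (x : Fin d → ℝ) :
    (affineBasis d k).coord i x = scaledBaryCoord d k x i / (d * k + 1) := by
  conv_lhs => rw [← affineCombination_scaledBaryCoord d k x]
  exact (affineBasis d k).coord_apply_combination_of_mem (Finset.mem_univ i)
    (sum_scaledBaryCoord_div d k x)

theorem eq_setOf_scaledBaryCoord_nonneg (d k : ℕ) :
    Sdk d k = {x | ∀ i, 0 ≤ scaledBaryCoord d k x i} := by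
  have hD : (0 : ℝ) < d * k + 1 := by positivity
  rw [eq_convexHull, ← coe_affineBasis, AffineBasis.convexHull_eq_nonneg_coord]
  simp only [coord_affineBasis, le_div_iff₀ hD, zero_mul]

theorem interior_eq_setOf_scaledBaryCoord_pos (d k : ℕ) :
    interior (Sdk d k) = {x | ∀ i, 0 < scaledBaryCoord d k x i} := by
  have hD : (0 : ℝ) < d * k + 1 := by positivity
  rw [eq_convexHull, ← coe_affineBasis, AffineBasis.interior_convexHull]
  simp only [coord_affineBasis, lt_div_iff₀ hD, zero_mul]

theorem neg_const_mem_interior (d : ℕ) {k n : ℕ} (hn : n < k) :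
    (fun _ => -(n : ℝ) : Fin d → ℝ) ∈ interior (Sdk d k) := by
  have hnk : (n : ℝ) < k := by exact_mod_cast hn
  rw [interior_eq_setOf_scaledBaryCoord_pos]
  intro i
  refine Fin.lastCases ?_ (fun i => ?_) i <;>
    simp only [scaledBaryCoord, Fin.snoc_last, Fin.snoc_castSucc, Finset.sum_const,
      Finset.card_univ, Fintype.card_fin, nsmul_eq_mul] <;>
    nlinarith [(by positivity : (0 : ℝ) ≤ d * n)]

theorem eq_single_or_eq_neg_const_of_sum_le_one {d k : ℕ} (hd : 0 < d) {z : Fin d → ℤ}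
    (hsum : ∑ j, z j ≤ 1) (hz : ∀ i, 0 ≤ (d * k + 1) * z i + k * (1 - ∑ j, z j)) :
    (∃ i, z = Pi.single i 1) ∨ ∃ n ≤ k, z = fun _ => -(n : ℤ) := by
  set s := ∑ j, z j
  rcases (by omega : s = 1 ∨ s ≤ 0) with hs1 | hs0
  · refine Or.inl (exists_eq_single_of_nonneg_of_sum_eq_one (fun i => ?_) hs1)
    have := hz i
    rw [hs1, sub_self, mul_zero, add_zero] at this
    exact nonneg_of_mul_nonneg_right this (by positivity)
  · -- each facet inequality now says that `z i` is at least the mean `s / d`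
    have hmean : ∀ i, s ≤ d * z i := by
      intro i
      by_contra! hlt
      have := mul_le_mul_of_nonneg_left (show d * z i ≤ s - 1 by omega)
        (show (0 : ℤ) ≤ d * k + 1 by positivity)
      nlinarith [hz i]
    have hdz : ∀ i, d * z i = s := by
      simpa using card_mul_eq_sum_of_forall_sum_le z (by simpa using hmean)
    set c := z ⟨0, hd⟩
    have hconst : ∀ i, z i = c := fun i =>
      mul_left_cancel₀ (by positivity : (d : ℤ) ≠ 0) ((hdz i).trans (hdz _).symm)
    have hc0 : c ≤ 0 := by nlinarith [hdz ⟨0, hd⟩]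
    have hck : -k ≤ c := by nlinarith [hz ⟨0, hd⟩, hdz ⟨0, hd⟩]
    exact Or.inr ⟨(-c).toNat, by omega, funext fun i => by rw [hconst i]; omega⟩

theorem mem_range_realVertex_or_eq_neg_const {d k : ℕ} (hd : 0 < d) {x : Fin d → ℝ}
    (hx : x ∈ Sdk d k) (hlat : IsLatticePt d x) :
    x ∈ range (realVertex d k) ∨ ∃ n < k, x = fun _ => -(n : ℝ) := by
  choose z hz using hlat
  obtain rfl : x = fun i => (z i : ℝ) := funext hz
  rw [eq_setOf_scaledBaryCoord_nonneg] at hx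
  have hsum : ∑ j, z j ≤ 1 := by
    have := hx (Fin.last d)
    simp only [scaledBaryCoord, Fin.snoc_last, sub_nonneg] at this
    exact_mod_cast this
  have hfacet : ∀ i, 0 ≤ (d * k + 1) * z i + k * (1 - ∑ j, z j) := by
    intro i
    have := hx i.castSucc
    simp only [scaledBaryCoord, Fin.snoc_castSucc] at this
    exact_mod_cast this
  rcases eq_single_or_eq_neg_const_of_sum_le_one hd hsum hfacet with ⟨i, rfl⟩ | ⟨n, hn, rfl⟩
  · refine Or.inl ⟨i.castSucc, ?_⟩
    ext j
    rcases eq_or_ne j i with rfl | hj <;> simp [*]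
  · rcases hn.lt_or_eq with hn | rfl
    · exact Or.inr ⟨n, hn, by simp⟩
    · exact Or.inl ⟨Fin.last d, by simp⟩

theorem extremePoints_eq (d k : ℕ) : extremePoints ℝ (Sdk d k) = range (realVertex d k) := by
  rw [eq_convexHull, ← coe_affineBasis, (affineBasis d k).extremePoints_convexHull]

theorem realVertex_notMem_interior {d : ℕ} (hd : 0 < d) (k : ℕ) (i : Fin (d + 1)) :
    realVertex d k i ∉ interior (Sdk d k) := by
  have : Nontrivial (Fin (d + 1)) := Fin.nontrivial_iff_two_le.2 (by omega)
  rw [eq_convexHull, ← coe_affineBasis]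
  exact (affineBasis d k).notMem_interior_convexHull i

theorem isClean {d : ℕ} (hd : 0 < d) (k : ℕ) : IsClean d (Sdk d k) := by
  have hclosed : IsClosed (Sdk d k) := by
    rw [eq_convexHull]
    exact (finite_range _).isClosed_convexHull ℝ
  rw [IsClean, extremePoints_eq, hclosed.frontier_eq]
  ext x
  refine ⟨fun ⟨⟨hxS, hxint⟩, hlat⟩ => ?_, ?_⟩
  · rcases mem_range_realVertex_or_eq_neg_const hd hxS hlat with hv | ⟨n, hn, rfl⟩
    · exact hv
    · exact absurd (neg_const_mem_interior d hn) hxint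
  · rintro ⟨i, rfl⟩
    refine ⟨⟨?_, realVertex_notMem_interior hd k i⟩, fun j => ⟨_, rfl⟩⟩
    rw [eq_convexHull]
    exact subset_convexHull ℝ _ ⟨i, rfl⟩

theorem interior_inter_isLatticePt {d : ℕ} (hd : 0 < d) (k : ℕ) :
    {x ∈ interior (Sdk d k) | IsLatticePt d x} = {x | ∃ n < k, x = fun _ => -(n : ℝ)} := by
  ext x
  refine ⟨fun ⟨hxint, hlat⟩ => ?_, ?_⟩
  · rcases mem_range_realVertex_or_eq_neg_const hd (interior_subset hxint) hlat
      with ⟨i, rfl⟩ | hx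
    · exact absurd hxint (realVertex_notMem_interior hd k i)
    · exact hx
  · rintro ⟨n, hn, rfl⟩
    exact ⟨neg_const_mem_interior d hn, fun _ => ⟨-n, by push_cast; rfl⟩⟩

end Sdk

theorem Sdk_clean_and_interior_points_general (d k : ℕ) (hd : 2 ≤ d) :
    IsLatticeSimplex d (Sdk d k) ∧
    IsClean d (Sdk d k) ∧
    Set.extremePoints ℝ (Sdk d k) =
      (Set.range fun i : Fin d => (Pi.single i 1 : Fin d → ℝ)) ∪ {fun _ => -(k : ℝ)} ∧
    {x ∈ interior (Sdk d k) | IsLatticePt d x} =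
      {x | ∃ i : ℕ, i < k ∧ x = fun _ => -(i : ℝ)} :=
  ⟨⟨Sdk.vertex d k, Sdk.affineIndependent_realVertex d k, Sdk.eq_convexHull d k⟩,
    Sdk.isClean (by omega) k,
    (Sdk.extremePoints_eq d k).trans (Sdk.range_realVertex d k),
    Sdk.interior_inter_isLatticePt (by omega) k⟩

/-- For `d ≥ 2` and `k ≥ 1`, `S_d(k)` is a clean lattice `d`-simplex whose
vertices are `e_1, …, e_d, -k(e_1+⋯+e_d)` and whose interior contains exactly the `k`
lattice points `-i(e_1+⋯+e_d)`, `i = 0, …, k-1`. -/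
theorem Sdk_clean_and_interior_points (d k : ℕ) (hd : 2 ≤ d) (hk : 1 ≤ k) :
    IsLatticeSimplex d (Sdk d k) ∧
    IsClean d (Sdk d k) ∧
    Set.extremePoints ℝ (Sdk d k) =
      (Set.range fun i : Fin d => (Pi.single i 1 : Fin d → ℝ)) ∪ {fun _ => -(k : ℝ)} ∧
    {x ∈ interior (Sdk d k) | IsLatticePt d x} =
      {x | ∃ i : ℕ, i < k ∧ x = fun _ => -(i : ℝ)} :=
  Sdk_clean_and_interior_points_general d k hd
end
end

section
/- Let d ≥ 3, k ≥ 1, and let T ⊂ ℝ^d be a clean lattice d-simplex whose interior contains exactly k lattice points. Suppose all interior lattice points of T lie on a line L that passes through a vertex v of T, and let w be the interior lattice point of T closest to v. Then every lattice point of T lying on L equals v + α(w − v) for some integer α with 0 ≤ α ≤ k; in particular the interior lattice points of T are exactly the k points v + i(w − v) for i = 1, …, k (so consecutive interior lattice points on L are evenly spaced). -/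
open MeasureTheory Set
open scoped ENNReal

noncomputable section

/-!
Write `g n = v + n • (w - v)`. Cleanness makes every lattice point of `T` outside the interior a
vertex, and a vertex never lies in the open segment between two other points of `T`. So the points
of `T` on the line through `v` and `w` lie on the ray from `v` through `w`, and no lattice point lies
strictly between `v` and `w`: it would be an interior lattice point closer to `v`. Subtracting
`⌊t⌋ • (w - v)` then shows that the lattice points on the ray are exactly the `g n`, `n : ℕ`.
If `g n` is interior, so are `g 1, …, g n` (they lie in the open segment `(v, g n)`); counting
gives the interior lattice points as `g 1, …, g k`. Finally a lattice point `g n ∈ T` with `n ≥ 1`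
outside the interior would be a vertex, putting `w` on the edge `[v, g n]`, which misses the
interior of a simplex with at least three vertices.
-/

open Function

section

variable {E : Type*} [AddCommGroup E] [Module ℝ E]

theorem add_smul_sub_mem_segment (v w : E) {s t : ℝ} (hs : 0 ≤ s) (hst : s ≤ t) :
    v + s • (w - v) ∈ segment ℝ v (v + t • (w - v)) := by
  obtain rfl | ht := (hs.trans hst).eq_or_lt
  · obtain rfl : s = 0 := le_antisymm hst hs
    simp
  rw [segment_eq_image']
  exact ⟨s / t, ⟨by positivity, (div_le_one ht).2 hst⟩, by
    simp only [add_sub_cancel_left, smul_smul, div_mul_cancel₀ s ht.ne']⟩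

theorem add_smul_sub_mem_openSegment (v w : E) {s t : ℝ} (hs : 0 < s) (hst : s < t) :
    v + s • (w - v) ∈ openSegment ℝ v (v + t • (w - v)) := by
  have ht : 0 < t := hs.trans hst
  rw [openSegment_eq_image']
  exact ⟨s / t, ⟨by positivity, (div_lt_one ht).2 hst⟩, by
    simp only [add_sub_cancel_left, smul_smul, div_mul_cancel₀ s ht.ne']⟩

theorem nonneg_of_add_smul_sub_mem {T : Set E} {v w : E} {t : ℝ}
    (hv : v ∈ T.extremePoints ℝ) (hw : w ∈ T) (hwv : w ≠ v) (ht : v + t • (w - v) ∈ T) :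
    0 ≤ t := by
  by_contra! h
  have h1t : 1 - t ≠ 0 := by linarith
  have hseg : v ∈ openSegment ℝ (v + t • (w - v)) w := by
    rw [openSegment_eq_image']
    refine ⟨-t / (1 - t), ⟨div_pos (by linarith) (by linarith), (div_lt_one (by linarith)).2
      (by linarith)⟩, ?_⟩
    match_scalars <;> field_simp <;> ring
  exact hwv ((mem_extremePoints.1 hv).2 _ ht _ hw hseg).2

theorem exists_eq_add_smul_sub_of_collinear {s : Set E} {v w y : E}
    (h : Collinear ℝ (insert v s)) (hw : w ∈ s) (hwv : w ≠ v) (hy : y ∈ s) :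
    ∃ t : ℝ, y = v + t • (w - v) := by
  obtain ⟨t, ht⟩ := mem_affineSpan_pair_iff_exists_lineMap_eq.1 <|
    h.mem_affineSpan_of_mem_of_ne (mem_insert _ _) (mem_insert_of_mem _ hw)
      (mem_insert_of_mem _ hy) hwv.symm
  exact ⟨t, by rw [← ht, AffineMap.lineMap_apply_module', add_comm]⟩

theorem natCast_smul_sub_mem {L : AddSubgroup E} {v w : E} (hv : v ∈ L) (hw : w ∈ L) (n : ℕ) :
    (n : ℝ) • (w - v) ∈ L := by
  rw [Nat.cast_smul_eq_nsmul]
  exact L.nsmul_mem (L.sub_mem hw hv) n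

theorem exists_nat_eq_of_add_smul_sub_mem {L : AddSubgroup E} {v w : E} (hv : v ∈ L) (hw : w ∈ L)
    (hgap : ∀ s : ℝ, 0 < s → s < 1 → v + s • (w - v) ∉ L) {t : ℝ} (ht : 0 ≤ t)
    (htL : v + t • (w - v) ∈ L) : ∃ n : ℕ, t = n := by
  refine ⟨⌊t⌋₊, by_contra fun hne => hgap (t - ⌊t⌋₊) ?_ ?_ ?_⟩
  · exact sub_pos.2 ((Nat.floor_le ht).lt_of_ne' hne)
  · linarith [Nat.lt_floor_add_one t]
  · convert L.sub_mem htL (natCast_smul_sub_mem hv hw ⌊t⌋₊) using 1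
    module

theorem injective_add_natCast_smul_sub {v w : E} (hwv : w ≠ v) :
    Injective fun n : ℕ => v + (n : ℝ) • (w - v) :=
  (add_right_injective v).comp <| (smul_left_injective ℝ (sub_ne_zero.2 hwv)).comp Nat.cast_injective

variable [TopologicalSpace E] {T : Set E} {L : AddSubgroup E}

theorem mem_interior_of_mem_openSegment (hT : Convex ℝ T)
    (hclean : ∀ z ∈ T, z ∈ L → z ∉ interior T → z ∈ T.extremePoints ℝ) {a b z : E}
    (ha : a ∈ T) (hb : b ∈ T) (hab : a ≠ b) (hz : z ∈ openSegment ℝ a b) (hzL : z ∈ L) :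
    z ∈ interior T := by
  by_contra hzi
  obtain ⟨rfl, rfl⟩ :=
    (mem_extremePoints.1 (hclean z (hT.openSegment_subset ha hb hz) hzL hzi)).2 a ha b hb hz
  exact hab rfl

theorem image_Icc_subset_of_mem_interior (hT : Convex ℝ T)
    (hclean : ∀ z ∈ T, z ∈ L → z ∉ interior T → z ∈ T.extremePoints ℝ) {v w : E}
    (hv : v ∈ T) (hvi : v ∉ interior T) (hvL : v ∈ L) (hwL : w ∈ L) {n : ℕ}
    (hn : v + (n : ℝ) • (w - v) ∈ interior T) :
    (fun m : ℕ => v + (m : ℝ) • (w - v)) '' Icc 1 n ⊆ {x ∈ interior T | x ∈ L} := by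
  rintro _ ⟨m, ⟨hm, hmn⟩, rfl⟩
  refine ⟨?_, L.add_mem hvL (natCast_smul_sub_mem hvL hwL m)⟩
  obtain rfl | hmn := hmn.eq_or_lt
  · exact hn
  exact mem_interior_of_mem_openSegment hT hclean hv (interior_subset hn)
    (ne_of_mem_of_not_mem hn hvi).symm (add_smul_sub_mem_openSegment v w (by positivity)
    (by exact_mod_cast hmn)) (L.add_mem hvL (natCast_smul_sub_mem hvL hwL m))

end

theorem Set.eq_image_Icc_ncard {α : Type*} {S : Set α} {g : ℕ → α} (hg : Injective g)
    (hS : S.Finite) (hpos : S ⊆ g '' Ici 1) (hdown : ∀ n, g n ∈ S → g '' Icc 1 n ⊆ S) :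
    S = g '' Icc 1 S.ncard := by
  refine eq_of_subset_of_ncard_le ?_ ?_ ((finite_Icc _ _).image g)
  · intro y hy
    obtain ⟨n, hn, rfl⟩ := hpos hy
    refine ⟨n, ⟨hn, ?_⟩, rfl⟩
    simpa [ncard_image_of_injective _ hg] using ncard_le_ncard (hdown n hy) hS
  · simp [ncard_image_of_injective _ hg]

section

variable {E : Type*} [NormedAddCommGroup E] [NormedSpace ℝ E] {T : Set E} {L : AddSubgroup E}
  {v w : E}

theorem add_smul_sub_notMem_of_closest (hT : Convex ℝ T)
    (hclean : ∀ z ∈ T, z ∈ L → z ∉ interior T → z ∈ T.extremePoints ℝ)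
    (hv : v ∈ T) (hw : w ∈ interior T) (hwv : w ≠ v)
    (hclosest : ∀ w' ∈ interior T, w' ∈ L → dist v w ≤ dist v w') {s : ℝ} (hs0 : 0 < s)
    (hs1 : s < 1) : v + s • (w - v) ∉ L := by
  intro hzL
  have hseg : v + s • (w - v) ∈ openSegment ℝ v w := by
    rw [openSegment_eq_image']
    exact ⟨s, ⟨hs0, hs1⟩, rfl⟩
  have hle := hclosest _
    (mem_interior_of_mem_openSegment hT hclean hv (interior_subset hw) hwv.symm hseg hzL) hzL
  rw [dist_self_add_right, norm_smul, Real.norm_of_nonneg hs0.le, dist_comm, dist_eq_norm] at hle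
  nlinarith [norm_pos_iff.2 (sub_ne_zero.2 hwv)]

theorem exists_nat_eq_of_closest (hT : Convex ℝ T)
    (hclean : ∀ z ∈ T, z ∈ L → z ∉ interior T → z ∈ T.extremePoints ℝ)
    (hv : v ∈ T.extremePoints ℝ) (hw : w ∈ interior T) (hwv : w ≠ v) (hvL : v ∈ L) (hwL : w ∈ L)
    (hclosest : ∀ w' ∈ interior T, w' ∈ L → dist v w ≤ dist v w') {t : ℝ}
    (ht : v + t • (w - v) ∈ T) (htL : v + t • (w - v) ∈ L) : ∃ n : ℕ, t = n :=
  exists_nat_eq_of_add_smul_sub_mem hvL hwL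
    (fun _ => add_smul_sub_notMem_of_closest hT hclean hv.1 hw hwv hclosest)
    (nonneg_of_add_smul_sub_mem hv (interior_subset hw) hwv ht) htL

theorem interior_lattice_points_eq_image_Icc (hT : Convex ℝ T)
    (hclean : ∀ z ∈ T, z ∈ L → z ∉ interior T → z ∈ T.extremePoints ℝ)
    (hv : v ∈ T.extremePoints ℝ) (hvi : v ∉ interior T) (hw : w ∈ interior T) (hvL : v ∈ L)
    (hwL : w ∈ L) (hclosest : ∀ w' ∈ interior T, w' ∈ L → dist v w ≤ dist v w')
    (hcol : Collinear ℝ (insert v {x ∈ interior T | x ∈ L}))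
    (hfin : {x ∈ interior T | x ∈ L}.Finite) :
    {x ∈ interior T | x ∈ L} =
      (fun n : ℕ => v + (n : ℝ) • (w - v)) '' Icc 1 {x ∈ interior T | x ∈ L}.ncard := by
  have hwv : w ≠ v := ne_of_mem_of_not_mem hw hvi
  refine Set.eq_image_Icc_ncard (injective_add_natCast_smul_sub hwv) hfin ?_
    fun n hn => image_Icc_subset_of_mem_interior hT hclean hv.1 hvi hvL hwL hn.1
  rintro y ⟨hyi, hyL⟩
  obtain ⟨t, rfl⟩ := exists_eq_add_smul_sub_of_collinear hcol ⟨hw, hwL⟩ hwv ⟨hyi, hyL⟩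
  obtain ⟨n, rfl⟩ :=
    exists_nat_eq_of_closest hT hclean hv hw hwv hvL hwL hclosest (interior_subset hyi) hyL
  refine ⟨n, Nat.one_le_iff_ne_zero.2 ?_, rfl⟩
  rintro rfl
  exact hvi (by simpa using hyi)

end

theorem exists_ne_ne_of_two_lt_card {ι : Type*} [Fintype ι] (hι : 2 < Fintype.card ι) (i j : ι) :
    ∃ l, l ≠ i ∧ l ≠ j := by
  classical
  have : 1 < (Finset.univ.erase i).card := by
    rw [Finset.card_erase_of_mem (Finset.mem_univ i), Finset.card_univ]; omega
  obtain ⟨l, hl, hlj⟩ := Finset.exists_mem_ne this j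
  exact ⟨l, Finset.ne_of_mem_erase hl, hlj⟩

theorem AffineBasis.notMem_interior_convexHull_of_mem_segment {ι E : Type*} [Fintype ι]
    [NormedAddCommGroup E] [NormedSpace ℝ E] (b : AffineBasis ι ℝ E)
    (hι : 2 < Fintype.card ι) (i j : ι) {z : E} (hz : z ∈ segment ℝ (b i) (b j)) :
    z ∉ interior (convexHull ℝ (range b)) := by
  obtain ⟨l, hli, hlj⟩ := exists_ne_ne_of_two_lt_card hι i j
  rw [segment_eq_image_lineMap] at hz
  obtain ⟨s, -, rfl⟩ := hz
  rw [b.interior_convexHull]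
  intro h
  simpa [(b.coord l).apply_lineMap, b.coord_apply_ne hli, b.coord_apply_ne hlj] using h l

theorem AffineBasis.add_natCast_smul_sub_mem_interior {ι E : Type*} [Fintype ι]
    [NormedAddCommGroup E] [NormedSpace ℝ E] (b : AffineBasis ι ℝ E) (hι : 2 < Fintype.card ι)
    {L : AddSubgroup E}
    (hclean : ∀ z ∈ convexHull ℝ (range b), z ∈ L → z ∉ interior (convexHull ℝ (range b)) →
      z ∈ (convexHull ℝ (range b)).extremePoints ℝ)
    {v w : E} (hv : v ∈ range b) (hw : w ∈ interior (convexHull ℝ (range b))) {n : ℕ}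
    (hn : 0 < n) (hx : v + (n : ℝ) • (w - v) ∈ convexHull ℝ (range b))
    (hxL : v + (n : ℝ) • (w - v) ∈ L) :
    v + (n : ℝ) • (w - v) ∈ interior (convexHull ℝ (range b)) := by
  by_contra hxi
  obtain ⟨i, rfl⟩ := hv
  obtain ⟨j, hj⟩ := extremePoints_convexHull_subset (hclean _ hx hxL hxi)
  refine b.notMem_interior_convexHull_of_mem_segment hι i j ?_ hw
  rw [hj]
  simpa using add_smul_sub_mem_segment (b i) w zero_le_one (Nat.one_le_cast.2 hn)

def latticePts (d : ℕ) : AddSubgroup (Fin d → ℝ) :=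
  AddSubgroup.pi univ fun _ => (Int.castAddHom ℝ).range

theorem mem_latticePts {d : ℕ} {x : Fin d → ℝ} : x ∈ latticePts d ↔ IsLatticePt d x := by
  simp [latticePts, AddSubgroup.mem_pi, IsLatticePt, AddSubgroup.mem_zmultiples_iff, eq_comm]

namespace IsClean

variable {d : ℕ} {P : Set (Fin d → ℝ)} {z : Fin d → ℝ}

theorem mem_extremePoints (h : IsClean d P) (hP : IsClosed P) (hz : z ∈ P)
    (hzL : z ∈ latticePts d) (hzi : z ∉ interior P) : z ∈ P.extremePoints ℝ :=
  h ▸ ⟨hP.frontier_eq ▸ ⟨hz, hzi⟩, mem_latticePts.1 hzL⟩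

theorem notMem_interior (h : IsClean d P) (hz : z ∈ P.extremePoints ℝ) : z ∉ interior P :=
  (h.symm ▸ hz : z ∈ frontier P ∩ _).1.2

theorem mem_latticePts_of_mem_extremePoints (h : IsClean d P) (hz : z ∈ P.extremePoints ℝ) :
    z ∈ latticePts d :=
  _root_.mem_latticePts.2 (h.symm ▸ hz : z ∈ frontier P ∩ _).2

end IsClean

theorem IsLatticeSimplex.exists_affineBasis {d : ℕ} {T : Set (Fin d → ℝ)}
    (hT : IsLatticeSimplex d T) :
    ∃ b : AffineBasis (Fin (d + 1)) ℝ (Fin d → ℝ), T = convexHull ℝ (range b) := by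
  obtain ⟨p, hp, rfl⟩ := hT
  exact ⟨⟨_, hp, hp.affineSpan_eq_top_iff_card_eq_finrank_add_one.2 (by simp)⟩, rfl⟩

/-- If the interior lattice points of a clean `k`-point lattice `d`-simplex
(`d ≥ 3`) lie on a line through a vertex `v`, and `w` is the interior lattice point
closest to `v`, then the lattice points of `T` on that line are exactly
`v + α(w - v)` with `α ∈ {0, 1, …, k}`, and the interior lattice points are exactly
`v + i(w - v)` for `i = 1, …, k` (evenly spaced). -/
theorem interior_points_evenly_spaced (d k : ℕ) (hd : 3 ≤ d) (hk : 1 ≤ k)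
    (T : Set (Fin d → ℝ)) (hT : IsLatticeSimplex d T) (hclean : IsClean d T)
    (hint : {x ∈ interior T | IsLatticePt d x}.ncard = k)
    (v : Fin d → ℝ) (hv : v ∈ Set.extremePoints ℝ T)
    (hcol : Collinear ℝ (insert v {x ∈ interior T | IsLatticePt d x}))
    (w : Fin d → ℝ) (hw : w ∈ interior T) (hwl : IsLatticePt d w)
    (hclosest : ∀ w' ∈ interior T, IsLatticePt d w' → dist v w ≤ dist v w') :
    (∀ x ∈ T, IsLatticePt d x → (∃ t : ℝ, x = v + t • (w - v)) →
      ∃ α : ℤ, 0 ≤ α ∧ α ≤ (k : ℤ) ∧ x = v + (α : ℝ) • (w - v)) ∧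
    {x ∈ interior T | IsLatticePt d x} =
      {x | ∃ i : ℕ, 1 ≤ i ∧ i ≤ k ∧ x = v + (i : ℝ) • (w - v)} := by
  obtain ⟨b, rfl⟩ := hT.exists_affineBasis
  simp_rw [← mem_latticePts] at hint hcol hwl hclosest ⊢
  set T := convexHull ℝ (range b)
  have hconv : Convex ℝ T := convex_convexHull ℝ _
  have hbdry : ∀ z ∈ T, z ∈ latticePts d → z ∉ interior T → z ∈ T.extremePoints ℝ :=
    fun z => hclean.mem_extremePoints ((finite_range b).isClosed_convexHull ℝ)
  have hvi : v ∉ interior T := hclean.notMem_interior hv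
  have hvL : v ∈ latticePts d := hclean.mem_latticePts_of_mem_extremePoints hv
  have hwv : w ≠ v := ne_of_mem_of_not_mem hw hvi
  have hS := interior_lattice_points_eq_image_Icc hconv hbdry hv hvi hw hvL hwl hclosest hcol
    (finite_of_ncard_pos (by omega))
  rw [hint] at hS
  refine ⟨?_, by rw [hS]; ext; simp [eq_comm, and_assoc]⟩
  rintro x hxT hxL ⟨t, rfl⟩
  obtain ⟨n, rfl⟩ := exists_nat_eq_of_closest hconv hbdry hv hw hwv hvL hwl hclosest hxT hxL
  obtain rfl | hn := n.eq_zero_or_pos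
  · exact ⟨0, le_rfl, by positivity, by simp⟩
  have hxS : v + (n : ℝ) • (w - v) ∈ {x ∈ interior T | x ∈ latticePts d} :=
    ⟨b.add_natCast_smul_sub_mem_interior (by rw [Fintype.card_fin]; omega) hbdry
      (extremePoints_convexHull_subset hv) hw hn hxT hxL, hxL⟩
  rw [hS] at hxS
  obtain ⟨m, ⟨-, hmk⟩, hm⟩ := hxS
  obtain rfl := injective_add_natCast_smul_sub hwv hm
  exact ⟨m, by positivity, by exact_mod_cast hmk, by simp⟩
end
end

section
/- Let d ≥ 2 and let T ⊂ ℝ^d be a clean lattice d-simplex with at least two interior lattice points. Let w_1 ≠ w_2 be lattice points in the interior of T and let v ≠ v' be vertices of T. Suppose the four points w_1, w_2, v, v' lie in a common 2-dimensional affine subspace, each is an extreme point of Q = conv{w_1, w_2, v, v'}, and q_1, q_2, q_3, q_4 is a cyclic vertex order of the quadrilateral Q (so the edges of Q are [q_1,q_2], [q_2,q_3], [q_3,q_4], [q_4,q_1]). Then no edge of Q is parallel to its opposite edge: q_2 − q_1 is not a real scalar multiple of q_4 − q_3, and q_3 − q_2 is not a real scalar multiple of q_1 − q_4. -/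
open MeasureTheory Set
open scoped ENNReal

noncomputable section

/-!
Work in barycentric coordinates with respect to the vertices of `T`: interior points have all
coordinates in `(0, 1)`. Going round a convex quadrilateral, two parallel opposite edges point in
opposite directions.

* If `w₁, w₂` are opposite corners, the diagonal `[w₁, w₂]` is interior while the edge `[v, v']`
  of `T` lies on its boundary, so the diagonals cannot cross.
* If the edge `[w₁, w₂]` is parallel to `[v', v]`, then `w₂ - w₁ = t • (v' - v)` with `0 < t`, and
  the `v'`-coordinate shows `t < 1`; so `v + (w₂ - w₁)` is a lattice point in the relative interior
  of the edge `[v, v']`, contradicting cleanness.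
* If, going round `v, w, w', v'`, the edge `[v, w]` is parallel to `[w', v']`, then the
  `v'`-coordinate of `w - v = c • (v' - w')` shows `c > 0`: the wrong orientation.
-/

namespace AffineBasis

variable {ι E : Type*} [NormedAddCommGroup E] [NormedSpace ℝ E] (b : AffineBasis ι ℝ E)

theorem coord_pos_of_mem_interior [Finite ι] {x : E}
    (hx : x ∈ interior (convexHull ℝ (range b))) (i : ι) : 0 < b.coord i x := by
  rw [b.interior_convexHull] at hx
  exact hx i

theorem coord_lt_one_of_mem_interior [Fintype ι] [Nontrivial ι] {x : E}
    (hx : x ∈ interior (convexHull ℝ (range b))) (i : ι) : b.coord i x < 1 := by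
  classical
  obtain ⟨j, hji⟩ := exists_ne i
  calc b.coord i x < b.coord i x + b.coord j x :=
        lt_add_of_pos_right _ (b.coord_pos_of_mem_interior hx j)
    _ = ∑ k ∈ {i, j}, b.coord k x := (Finset.sum_pair (f := fun k => b.coord k x) hji.symm).symm
    _ ≤ ∑ k, b.coord k x := Finset.sum_le_sum_of_subset_of_nonneg (Finset.subset_univ _)
        fun k _ _ => (b.coord_pos_of_mem_interior hx k).le
    _ = 1 := b.sum_coord_apply_eq_one x

theorem coord_sub_coord (i : ι) (x y : E) :
    b.coord i x - b.coord i y = (b.coord i).linear (x - y) :=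
  ((b.coord i).linearMap_vsub x y).symm

theorem coord_eq_zero_of_mem_segment {i j k : ι} (hki : k ≠ i) (hkj : k ≠ j) {x : E}
    (hx : x ∈ segment ℝ (b i) (b j)) : b.coord k x = 0 := by
  obtain ⟨s, t, -, -, hst, rfl⟩ := hx
  rw [Convex.combo_affine_apply hst, b.coord_apply_ne hki, b.coord_apply_ne hkj]
  simp

theorem disjoint_segment_interior_convexHull [Finite ι] (hι : 3 ≤ ENat.card ι) (i j : ι) :
    Disjoint (segment ℝ (b i) (b j)) (interior (convexHull ℝ (range b))) := by
  obtain ⟨k, hki, hkj⟩ := ENat.exists_ne_ne_of_three_le hι i j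
  exact disjoint_left.2 fun x hx hx' =>
    (b.coord_pos_of_mem_interior hx' k).ne' (b.coord_eq_zero_of_mem_segment hki hkj hx)

theorem disjoint_segment_of_mem_interior [Finite ι] (hι : 3 ≤ ENat.card ι) {x y v v' : E}
    (hx : x ∈ interior (convexHull ℝ (range b))) (hy : y ∈ interior (convexHull ℝ (range b)))
    (hv : v ∈ range b) (hv' : v' ∈ range b) :
    Disjoint (segment ℝ x y) (segment ℝ v v') := by
  obtain ⟨i, rfl⟩ := hv
  obtain ⟨j, rfl⟩ := hv'
  exact (b.disjoint_segment_interior_convexHull hι i j).symm.mono_left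
    ((convex_convexHull ℝ _).interior.segment_subset hx hy)

theorem pos_of_sub_eq_smul_sub [Fintype ι] {x y v v' : E}
    (hx : x ∈ interior (convexHull ℝ (range b))) (hy : y ∈ interior (convexHull ℝ (range b)))
    (hv : v ∈ range b) (hv' : v' ∈ range b) (hvv' : v ≠ v') {c : ℝ}
    (h : x - v = c • (v' - y)) : 0 < c := by
  obtain ⟨i, rfl⟩ := hv
  obtain ⟨j, rfl⟩ := hv'
  have hij : i ≠ j := fun hij => hvv' (congrArg b hij)
  have : Nontrivial ι := ⟨i, j, hij⟩
  have hcoord := congrArg (b.coord j).linear h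
  rw [map_smul, ← coord_sub_coord, ← coord_sub_coord, b.coord_apply_eq,
    b.coord_apply_ne hij.symm, sub_zero, smul_eq_mul] at hcoord
  nlinarith [b.coord_pos_of_mem_interior hx j, b.coord_lt_one_of_mem_interior hy j]

end AffineBasis

theorem IsLatticePt.add_sub {d : ℕ} {x y z : Fin d → ℝ} (hx : IsLatticePt d x)
    (hy : IsLatticePt d y) (hz : IsLatticePt d z) : IsLatticePt d (x + (y - z)) := fun i => by
  obtain ⟨a, ha⟩ := hx i
  obtain ⟨b, hb⟩ := hy i
  obtain ⟨c, hc⟩ := hz i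
  exact ⟨a + (b - c), by simp [ha, hb, hc]⟩

section ConvexPosition

variable {E : Type*} [AddCommGroup E] [Module ℝ E] {A : Set E}

theorem not_collinear_of_mem_extremePoints {x y z : E} (hx : x ∈ A.extremePoints ℝ)
    (hy : y ∈ A.extremePoints ℝ) (hz : z ∈ A.extremePoints ℝ) (hxy : x ≠ y) (hyz : y ≠ z)
    (hxz : x ≠ z) : ¬ Collinear ℝ {x, y, z} := by
  have endpoint : ∀ {p q r : E}, Wbtw ℝ p q r → p ∈ A.extremePoints ℝ →
      q ∈ A.extremePoints ℝ → r ∈ A.extremePoints ℝ → p = q ∨ r = q :=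
    fun h hp hq hr => (mem_extremePoints_iff_forall_segment.1 hq).2 _ hp.1 _ hr.1 h.mem_segment
  intro hcol
  rcases hcol.wbtw_or_wbtw_or_wbtw with h | h | h
  · rcases endpoint h hx hy hz with h' | h'
    exacts [hxy h', hyz h'.symm]
  · rcases endpoint h hy hz hx with h' | h'
    exacts [hyz h', hxz h']
  · rcases endpoint h hz hx hy with h' | h'
    exacts [hxz h'.symm, hxy h'.symm]

theorem neg_of_sub_eq_smul_sub {p : Fin 4 → E} (hp : Function.Injective p)
    (hext : ∀ m, p m ∈ A.extremePoints ℝ)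
    (hcross : (segment ℝ (p 0) (p 2) ∩ segment ℝ (p 1) (p 3)).Nonempty) {c : ℝ}
    (h : p 1 - p 0 = c • (p 3 - p 2)) : c < 0 := by
  have hc : c ≠ 0 := by
    rintro rfl
    exact hp.ne (by decide : (1 : Fin 4) ≠ 0) (sub_eq_zero.1 (h.trans (zero_smul ℝ _)))
  by_contra! hc'
  replace hc' : 0 < c := lt_of_le_of_ne hc' hc.symm
  obtain ⟨x, ⟨s₀, s, hs₀, hs, hs₀s, rfl⟩, ⟨t₀, t, ht₀, ht, ht₀t, hx⟩⟩ := hcross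
  obtain rfl : s₀ = 1 - s := by linarith
  obtain rfl : t₀ = 1 - t := by linarith
  have hα : 0 < (1 - t) * c + t := by
    rcases le_total c 1 with h1 | h1 <;>
      nlinarith [mul_nonneg ht (sub_nonneg.2 h1), mul_nonneg ht₀ (sub_nonneg.2 h1)]
  -- For `c > 0` the crossing point of the diagonals puts `p 3` on the line through `p 0`, `p 2`.
  have hkey : ((1 - t) * c + t) • (p 3 - p 0) = (s + (1 - t) * c) • (p 2 - p 0) := by
    linear_combination (norm := module) hx - (1 - t) • h
  have hline : p 3 = AffineMap.lineMap (p 0) (p 2) ((s + (1 - t) * c) / ((1 - t) * c + t)) := by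
    rw [AffineMap.lineMap_apply, vsub_eq_sub, vadd_eq_add, div_eq_inv_mul, mul_smul, ← hkey,
      inv_smul_smul₀ hα.ne', sub_add_cancel]
  refine not_collinear_of_mem_extremePoints (hext 3) (hext 0) (hext 2) (hp.ne (by decide))
    (hp.ne (by decide)) (hp.ne (by decide)) (collinear_insert_of_mem_affineSpan_pair ?_)
  rw [hline]
  exact AffineMap.lineMap_mem_affineSpan_pair _ _ _

end ConvexPosition

namespace AffineBasis

variable {ι : Type*} [Fintype ι] {d : ℕ} (b : AffineBasis ι ℝ (Fin d → ℝ))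

theorem not_isLatticePt_lineMap (hclean : IsClean d (convexHull ℝ (range b)))
    (hι : 3 ≤ ENat.card ι) {i j : ι} (hij : i ≠ j) {t : ℝ} (ht : t ∈ Ioo 0 1) :
    ¬ IsLatticePt d (AffineMap.lineMap (b i) (b j) t) := by
  intro hlat
  have hopen : AffineMap.lineMap (b i) (b j) t ∈ openSegment ℝ (b i) (b j) := by
    rw [openSegment_eq_image_lineMap]
    exact mem_image_of_mem _ ht
  have hseg := openSegment_subset_segment (𝕜 := ℝ) _ _ hopen
  have hfrontier : AffineMap.lineMap (b i) (b j) t ∈ frontier (convexHull ℝ (range b)) := by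
    rw [((finite_range b).isCompact_convexHull (𝕜 := ℝ)).isClosed.frontier_eq]
    exact ⟨segment_subset_convexHull (mem_range_self i) (mem_range_self j) hseg,
      disjoint_left.1 (b.disjoint_segment_interior_convexHull hι i j) hseg⟩
  have hext := (mem_extremePoints.1 (hclean ▸ ⟨hfrontier, hlat⟩)).2 _
    (subset_convexHull ℝ _ (mem_range_self i)) _ (subset_convexHull ℝ _ (mem_range_self j)) hopen
  exact hij (b.ind.injective (hext.1.trans hext.2.symm))

theorem sub_ne_smul_sub_of_isClean (hclean : IsClean d (convexHull ℝ (range b)))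
    (hι : 3 ≤ ENat.card ι) (hb : ∀ i, IsLatticePt d (b i)) {x y v v' : Fin d → ℝ}
    (hx : x ∈ interior (convexHull ℝ (range b))) (hy : y ∈ interior (convexHull ℝ (range b)))
    (hlx : IsLatticePt d x) (hly : IsLatticePt d y)
    (hv : v ∈ range b) (hv' : v' ∈ range b) (hvv' : v ≠ v') {t : ℝ} (ht : 0 < t) :
    y - x ≠ t • (v' - v) := by
  intro h
  obtain ⟨i, rfl⟩ := hv
  obtain ⟨j, rfl⟩ := hv'
  have hij : i ≠ j := fun hij => hvv' (congrArg b hij)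
  have : Nontrivial ι := ⟨i, j, hij⟩
  have hcoord := congrArg (b.coord j).linear h
  rw [map_smul, ← coord_sub_coord, ← coord_sub_coord, b.coord_apply_eq,
    b.coord_apply_ne hij.symm, sub_zero, smul_eq_mul, mul_one] at hcoord
  have ht1 : t < 1 := by
    linarith [b.coord_lt_one_of_mem_interior hy j, b.coord_pos_of_mem_interior hx j]
  apply b.not_isLatticePt_lineMap hclean hι hij ⟨ht, ht1⟩
  rw [AffineMap.lineMap_apply, vsub_eq_sub, vadd_eq_add, ← h, add_comm]
  exact (hb i).add_sub hly hlx

theorem sub_ne_smul_sub_of_positions (hclean : IsClean d (convexHull ℝ (range b)))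
    (hι : 3 ≤ ENat.card ι) (hb : ∀ i, IsLatticePt d (b i)) {Q : Set (Fin d → ℝ)}
    {r : Fin 4 → Fin d → ℝ} (hr : Function.Injective r) (hext : ∀ m, r m ∈ Q.extremePoints ℝ)
    (hcross : (segment ℝ (r 0) (r 2) ∩ segment ℝ (r 1) (r 3)).Nonempty) {a a' : Fin 4}
    (haa' : a < a')
    (hW : ∀ m, m = a ∨ m = a' →
      r m ∈ interior (convexHull ℝ (range b)) ∧ IsLatticePt d (r m))
    (hV : ∀ m, m ≠ a → m ≠ a' → r m ∈ range b) (c : ℝ) :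
    r 1 - r 0 ≠ c • (r 3 - r 2) := by
  intro h
  have hc := neg_of_sub_eq_smul_sub hr hext hcross h
  fin_cases a <;> fin_cases a' <;> try exact absurd haa' (by decide)
  · refine b.sub_ne_smul_sub_of_isClean hclean hι hb (hW 0 (by decide)).1 (hW 1 (by decide)).1
      (hW 0 (by decide)).2 (hW 1 (by decide)).2 (hV 3 (by decide) (by decide))
      (hV 2 (by decide) (by decide)) (hr.ne (by decide)) (neg_pos.2 hc) ?_
    rw [h, neg_smul, ← smul_neg, neg_sub]
  · exact not_disjoint_iff_nonempty_inter.2 hcross <| b.disjoint_segment_of_mem_interior hι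
      (hW 0 (by decide)).1 (hW 2 (by decide)).1 (hV 1 (by decide) (by decide))
      (hV 3 (by decide) (by decide))
  · refine (b.pos_of_sub_eq_smul_sub (hW 0 (by decide)).1 (hW 3 (by decide)).1
      (hV 1 (by decide) (by decide)) (hV 2 (by decide) (by decide)) (hr.ne (by decide))
      ?_).not_gt hc
    rw [← neg_sub, h, ← smul_neg, neg_sub]
  · exact (b.pos_of_sub_eq_smul_sub (hW 1 (by decide)).1 (hW 2 (by decide)).1
      (hV 0 (by decide) (by decide)) (hV 3 (by decide) (by decide)) (hr.ne (by decide))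
      h).not_gt hc
  · exact not_disjoint_iff_nonempty_inter.2 (inter_comm _ _ ▸ hcross) <|
      b.disjoint_segment_of_mem_interior hι (hW 1 (by decide)).1 (hW 3 (by decide)).1
      (hV 0 (by decide) (by decide)) (hV 2 (by decide) (by decide))
  · refine b.sub_ne_smul_sub_of_isClean hclean hι hb (hW 2 (by decide)).1 (hW 3 (by decide)).1
      (hW 2 (by decide)).2 (hW 3 (by decide)).2 (hV 1 (by decide) (by decide))
      (hV 0 (by decide) (by decide)) (hr.ne (by decide)) (neg_pos.2 (inv_lt_zero.2 hc)) ?_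
    rw [eq_inv_smul_iff₀ hc.ne |>.2 h.symm, neg_smul, ← smul_neg, neg_sub]

theorem sub_ne_smul_sub_of_range_eq (hclean : IsClean d (convexHull ℝ (range b)))
    (hι : 3 ≤ ENat.card ι) (hb : ∀ i, IsLatticePt d (b i)) {w₁ w₂ v v' : Fin d → ℝ}
    (hw₁ : w₁ ∈ interior (convexHull ℝ (range b))) (hw₂ : w₂ ∈ interior (convexHull ℝ (range b)))
    (hl₁ : IsLatticePt d w₁) (hl₂ : IsLatticePt d w₂) (hww : w₁ ≠ w₂)
    (hv : v ∈ range b) (hv' : v' ∈ range b) (r : Fin 4 → Fin d → ℝ) {Q : Set (Fin d → ℝ)}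
    (hrange : range r = {w₁, w₂, v, v'}) (hr : Function.Injective r)
    (hext : ∀ m, r m ∈ Q.extremePoints ℝ)
    (hcross : (segment ℝ (r 0) (r 2) ∩ segment ℝ (r 1) (r 3)).Nonempty) (c : ℝ) :
    r 1 - r 0 ≠ c • (r 3 - r 2) := by
  obtain ⟨a, rfl⟩ : w₁ ∈ range r := by simp [hrange]
  obtain ⟨a', rfl⟩ : w₂ ∈ range r := by simp [hrange]
  have hW : ∀ m, m = a ∨ m = a' →
      r m ∈ interior (convexHull ℝ (range b)) ∧ IsLatticePt d (r m) := by
    rintro m (rfl | rfl)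
    exacts [⟨hw₁, hl₁⟩, ⟨hw₂, hl₂⟩]
  have hV : ∀ m, m ≠ a → m ≠ a' → r m ∈ range b := by
    intro m hma hma'
    have hm : r m ∈ ({r a, r a', v, v'} : Set (Fin d → ℝ)) := hrange ▸ mem_range_self m
    rcases hm with hm | hm | hm | hm
    exacts [absurd (hr hm) hma, absurd (hr hm) hma', hm ▸ hv, hm ▸ hv']
  rcases lt_or_gt_of_ne (ne_of_apply_ne r hww) with haa' | haa'
  · exact b.sub_ne_smul_sub_of_positions hclean hι hb hr hext hcross haa' hW hV c
  · exact b.sub_ne_smul_sub_of_positions hclean hι hb hr hext hcross haa'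
      (fun m hm => hW m hm.symm) (fun m hma' hma => hV m hma hma') c

end AffineBasis

theorem no_parallel_edges_general (d : ℕ) (hd : 2 ≤ d) (T : Set (Fin d → ℝ))
    (hT : IsLatticeSimplex d T) (hclean : IsClean d T)
    (w₁ w₂ v v' : Fin d → ℝ)
    (hw₁ : w₁ ∈ interior T) (hw₂ : w₂ ∈ interior T)
    (hl₁ : IsLatticePt d w₁) (hl₂ : IsLatticePt d w₂) (hww : w₁ ≠ w₂)
    (hv : v ∈ Set.extremePoints ℝ T) (hv' : v' ∈ Set.extremePoints ℝ T)
    (hext : ∀ x ∈ ({w₁, w₂, v, v'} : Set (Fin d → ℝ)),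
      x ∈ Set.extremePoints ℝ (convexHull ℝ {w₁, w₂, v, v'}))
    (q : Fin 4 → Fin d → ℝ) (hq : Set.range q = {w₁, w₂, v, v'})
    (hqinj : Function.Injective q)
    (hcyc : (segment ℝ (q 0) (q 2) ∩ segment ℝ (q 1) (q 3)).Nonempty) :
    (¬ ∃ c : ℝ, q 1 - q 0 = c • (q 3 - q 2)) ∧
    (¬ ∃ c : ℝ, q 2 - q 1 = c • (q 0 - q 3)) := by
  obtain ⟨V, hind, rfl⟩ := hT
  let b : AffineBasis (Fin (d + 1)) ℝ (Fin d → ℝ) :=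
    ⟨_, hind, hind.affineSpan_eq_top_iff_card_eq_finrank_add_one.2 (by simp)⟩
  have hι : 3 ≤ ENat.card (Fin (d + 1)) := by
    rw [ENat.card_eq_coe_fintype_card, Fintype.card_fin]
    exact_mod_cast (by omega : 3 ≤ d + 1)
  have hQ : ∀ m, q m ∈ (convexHull ℝ {w₁, w₂, v, v'}).extremePoints ℝ :=
    fun m => hext _ (hq ▸ mem_range_self m)
  have key := b.sub_ne_smul_sub_of_range_eq hclean hι (fun i j => ⟨V i j, rfl⟩) hw₁ hw₂ hl₁ hl₂
    hww (extremePoints_convexHull_subset hv) (extremePoints_convexHull_subset hv')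
  refine ⟨fun ⟨c, h⟩ => key q hq hqinj hQ hcyc c h, fun ⟨c, h⟩ =>
    key (q ∘ Equiv.addRight 1) ?_ (hqinj.comp (Equiv.addRight 1).injective) (fun m => hQ _) ?_ c h⟩
  · rw [(Equiv.addRight 1).surjective.range_comp, hq]
  · show (segment ℝ (q 1) (q 3) ∩ segment ℝ (q 2) (q 0)).Nonempty
    rwa [inter_comm, segment_symm ℝ (q 2)]

/-- In a clean lattice `d`-simplex (`d ≥ 2`) with at least two interior
lattice points, a planar quadrilateral whose vertices are two interior lattice points
`w₁ ≠ w₂` and two vertices `v ≠ v'` of `T` has no pair of parallel opposite edges.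
The cyclic order `q 0, q 1, q 2, q 3` of the quadrilateral is encoded by the crossing
of the diagonals. -/
theorem no_parallel_edges (d : ℕ) (hd : 2 ≤ d) (T : Set (Fin d → ℝ))
    (hT : IsLatticeSimplex d T) (hclean : IsClean d T)
    (hint : 2 ≤ {x ∈ interior T | IsLatticePt d x}.ncard)
    (w₁ w₂ v v' : Fin d → ℝ)
    (hw₁ : w₁ ∈ interior T) (hw₂ : w₂ ∈ interior T)
    (hl₁ : IsLatticePt d w₁) (hl₂ : IsLatticePt d w₂) (hww : w₁ ≠ w₂)
    (hv : v ∈ Set.extremePoints ℝ T) (hv' : v' ∈ Set.extremePoints ℝ T) (hvv : v ≠ v')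
    (hcop : Coplanar ℝ {w₁, w₂, v, v'})
    (hext : ∀ x ∈ ({w₁, w₂, v, v'} : Set (Fin d → ℝ)),
      x ∈ Set.extremePoints ℝ (convexHull ℝ {w₁, w₂, v, v'}))
    (q : Fin 4 → Fin d → ℝ) (hq : Set.range q = {w₁, w₂, v, v'})
    (hqinj : Function.Injective q)
    (hcyc : (segment ℝ (q 0) (q 2) ∩ segment ℝ (q 1) (q 3)).Nonempty) :
    (¬ ∃ c : ℝ, q 1 - q 0 = c • (q 3 - q 2)) ∧
    (¬ ∃ c : ℝ, q 2 - q 1 = c • (q 0 - q 3)) :=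
  no_parallel_edges_general d hd T hT hclean w₁ w₂ v v' hw₁ hw₂ hl₁ hl₂ hww hv hv' hext q hq hqinj
    hcyc
end
end

section
/- Let v_1, v_2, v_3, v_4 ∈ ℤ^d lie in a common 2-dimensional affine subspace, suppose each v_i is an extreme point of Q = conv{v_1, v_2, v_3, v_4}, and suppose v_1, v_2, v_3, v_4 is a cyclic vertex order of Q (the edges of Q are [v_1,v_2], [v_2,v_3], [v_3,v_4], [v_4,v_1]). If no edge of Q is parallel to its opposite edge (v_2 − v_1 is not a real scalar multiple of v_4 − v_3, and v_3 − v_2 is not a real scalar multiple of v_1 − v_4), then the relative interior of Q contains a point w ∈ ℤ^d with w ∉ {v_1, v_2, v_3, v_4}; moreover, w can be chosen to lie in the relative interior of the convex hull of some three of the points v_1, v_2, v_3, v_4. -/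
open MeasureTheory Set
open scoped ENNReal

noncomputable section

/-!
Let the diagonals meet at `(1 - s) V₀ + s V₂ = (1 - t) V₁ + t V₃` with `s, t ∈ (0, 1)`. Then
`V₀V₁ ∥ V₂V₃` exactly when `s = t`, and `V₁V₂ ∥ V₃V₀` exactly when `s + t = 1`. If `t < s` and
`s + t < 1`, the lattice point `V₀ + V₂ - V₁` equals
`((s - t) V₀ + (1 - s - t) V₂ + t V₃) / (1 - t)`, a combination with positive weights, so it lies
in the relative interior of the triangle `V₀V₂V₃`, whose affine span contains `V₁`; and a point
with such a representation is not an extreme point, hence not a vertex. The three other sign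
patterns of `s - t` and `s + t - 1` are this one after relabelling the vertices.
-/

section Module
variable {E : Type*} [AddCommGroup E] [Module ℝ E]

theorem eq_of_mem_extremePoints_of_add_add_eq {A : Set E} (hA : Convex ℝ A) {x y z u : E}
    (hu : u ∈ A.extremePoints ℝ) (hx : x ∈ A) (hy : y ∈ A) (hz : z ∈ A) {a b c : ℝ}
    (ha : 0 < a) (hb : 0 < b) (hc : 0 < c) (habc : a + b + c = 1)
    (h : a • x + b • y + c • z = u) : x = u ∧ y = u ∧ z = u := by
  have hbc : 0 < b + c := add_pos hb hc
  set m := (b / (b + c)) • y + (c / (b + c)) • z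
  have hm : m ∈ A := hA hy hz (by positivity) (by positivity) (by field_simp)
  have hxm : u ∈ openSegment ℝ x m :=
    ⟨a, b + c, ha, hbc, by linarith, by rw [← h]; match_scalars <;> field_simp⟩
  obtain ⟨hxu, hmu⟩ := (mem_extremePoints.mp hu).2 x hx m hm hxm
  have hyz : u ∈ openSegment ℝ y z := ⟨_, _, div_pos hb hbc, div_pos hc hbc, by field_simp, hmu⟩
  exact ⟨hxu, (mem_extremePoints.mp hu).2 y hy z hz hyz⟩

variable {V : Fin 4 → E} {s t : ℝ}

theorem exists_sub_eq_smul_sub_of_cross_of_eq (hst : s = t) (hs1 : s < 1)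
    (hcross : (1 - s) • V 0 + s • V 2 = (1 - t) • V 1 + t • V 3) :
    ∃ c : ℝ, V 1 - V 0 = c • (V 3 - V 2) := by
  subst hst
  have h1s : 1 - s ≠ 0 := by linarith
  refine ⟨-s / (1 - s), smul_right_injective E h1s ?_⟩
  simp only [smul_smul, mul_div_cancel₀ _ h1s]
  linear_combination (norm := module) -hcross

theorem exists_sub_eq_smul_sub_of_cross_of_add_eq_one (hst : s + t = 1) (hs0 : 0 < s)
    (hcross : (1 - s) • V 0 + s • V 2 = (1 - t) • V 1 + t • V 3) :
    ∃ c : ℝ, V 2 - V 1 = c • (V 0 - V 3) := by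
  obtain rfl : t = 1 - s := by linarith
  refine ⟨-(1 - s) / s, smul_right_injective E hs0.ne' ?_⟩
  simp only [smul_smul, mul_div_cancel₀ _ hs0.ne']
  linear_combination (norm := module) hcross

end Module

section NormedSpace
variable {E : Type*} [NormedAddCommGroup E] [NormedSpace ℝ E]

theorem AffineIndependent.sum_smul_mem_intrinsicInterior_convexHull
    {ι : Type*} [Fintype ι] {p : ι → E} (hp : AffineIndependent ℝ p)
    {w : ι → ℝ} (hw : ∀ i, 0 < w i) (hw1 : ∑ i, w i = 1) :
    ∑ i, w i • p i ∈ intrinsicInterior ℝ (convexHull ℝ (range p)) := by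
  set S := affineSpan ℝ (range p)
  have : Nonempty ι := by
    by_contra! h
    simp at hw1
  have : Nonempty (range p) := (range_nonempty p).to_subtype
  let q : ι → S := fun i => ⟨p i, subset_affineSpan ℝ _ (mem_range_self i)⟩
  have hq : range q = (↑) ⁻¹' range p := by
    ext x
    exact ⟨fun ⟨i, hi⟩ => ⟨i, congrArg Subtype.val hi⟩, fun ⟨i, hi⟩ => ⟨i, Subtype.ext hi⟩⟩
  let b : AffineBasis ι ℝ S := ⟨q, .of_comp S.subtype hp, hq ▸ affineSpan_coe_preimage_eq_top _⟩
  have hbp (c : ι → ℝ) (hc : ∑ i, c i = 1) :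
      ((Finset.univ.affineCombination ℝ b c : S) : E) = ∑ i, c i • p i := by
    rw [← S.subtype_apply, Finset.map_affineCombination _ _ _ hc]
    exact Finset.univ.affineCombination_eq_linear_combination _ _ hc
  rw [mem_intrinsicInterior, affineSpan_convexHull]
  refine ⟨Finset.univ.affineCombination ℝ b w, ?_, hbp w hw1⟩
  have hU : IsOpen {x : S | ∀ i, 0 < b.coord i x} := by
    rw [ofPred_forall]
    exact isOpen_iInter_of_finite fun i =>
      isOpen_lt continuous_const (b.coord i).continuous_of_finiteDimensional
  refine interior_maximal (fun x hx => ?_) hU fun i => ?_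
  · have hx1 := b.sum_coord_apply_eq_one x
    change (x : E) ∈ convexHull ℝ (range p)
    rw [← b.affineCombination_coord_eq_self x, hbp _ hx1,
      ← Finset.univ.affineCombination_eq_linear_combination _ _ hx1]
    exact affineCombination_mem_convexHull (fun i _ => (hx i).le) hx1
  · rw [b.coord_apply_combination_of_mem (Finset.mem_univ i) hw1]
    exact hw i

theorem intrinsicInterior_convexHull_subset_insert {s : Set E} {x : E}
    (hx : x ∈ affineSpan ℝ s) :
    intrinsicInterior ℝ (convexHull ℝ s) ⊆ intrinsicInterior ℝ (convexHull ℝ (insert x s)) := by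
  have hspan : affineSpan ℝ (convexHull ℝ (insert x s)) = affineSpan ℝ (convexHull ℝ s) := by
    rw [affineSpan_convexHull, affineSpan_convexHull, affineSpan_insert_eq_affineSpan ℝ hx]
  rw [intrinsicInterior, intrinsicInterior, hspan]
  exact image_mono (interior_mono (preimage_mono (convexHull_mono (subset_insert x s))))

section ExtremeFamily
variable {ι : Type*} {V : ι → E} (hVinj : Function.Injective V)
  (hext : ∀ i, V i ∈ (convexHull ℝ (range V)).extremePoints ℝ)
include hVinj hext

theorem notMem_segment_of_forall_mem_extremePoints {i j k : ι} (hij : i ≠ j) (hik : i ≠ k) :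
    V i ∉ segment ℝ (V j) (V k) := fun hseg => by
  have hQ l : V l ∈ convexHull ℝ (range V) := subset_convexHull ℝ _ (mem_range_self l)
  rcases (mem_extremePoints_iff_forall_segment.mp (hext i)).2 _ (hQ j) _ (hQ k) hseg with h | h
  exacts [hij (hVinj h.symm), hik (hVinj h.symm)]

theorem affineIndependent_of_forall_mem_extremePoints {i j k : ι} (hij : i ≠ j) (hik : i ≠ k)
    (hjk : j ≠ k) : AffineIndependent ℝ ![V i, V j, V k] := by
  rw [affineIndependent_iff_not_collinear_set]
  intro hcol
  have hnot {a b c : ι} (hab : a ≠ b) (hac : a ≠ c) (h : Wbtw ℝ (V b) (V a) (V c)) : False :=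
    notMem_segment_of_forall_mem_extremePoints hVinj hext hab hac (mem_segment_iff_wbtw.mpr h)
  rcases hcol.wbtw_or_wbtw_or_wbtw with h | h | h
  exacts [hnot hij.symm hjk h, hnot hjk.symm hik.symm h, hnot hik hij h]

end ExtremeFamily

section Quadrilateral
variable {V : Fin 4 → E} (hVinj : Function.Injective V)
  (hext : ∀ i, V i ∈ (convexHull ℝ (range V)).extremePoints ℝ)
include hVinj hext

theorem exists_cross_params_of_segment_inter_nonempty
    (hcyc : (segment ℝ (V 0) (V 2) ∩ segment ℝ (V 1) (V 3)).Nonempty) :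
    ∃ s t : ℝ, s ∈ Ioo 0 1 ∧ t ∈ Ioo 0 1 ∧ (1 - s) • V 0 + s • V 2 = (1 - t) • V 1 + t • V 3 := by
  obtain ⟨p, hp02, hp13⟩ := hcyc
  have hne {i j k : Fin 4} (hij : i ≠ j) (hik : i ≠ k) (hp : p ∈ segment ℝ (V j) (V k)) :
      V i ≠ p := fun h =>
    notMem_segment_of_forall_mem_extremePoints hVinj hext hij hik (h ▸ hp)
  have hp02' := mem_openSegment_of_ne_left_right (hne (i := 0) (by decide) (by decide) hp13)
    (hne (i := 2) (by decide) (by decide) hp13) hp02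
  have hp13' := mem_openSegment_of_ne_left_right (hne (i := 1) (by decide) (by decide) hp02)
    (hne (i := 3) (by decide) (by decide) hp02) hp13
  rw [openSegment_eq_image] at hp02' hp13'
  obtain ⟨s, hs, rfl⟩ := hp02'
  obtain ⟨t, ht, hst⟩ := hp13'
  exact ⟨s, t, hs, ht, hst.symm⟩

theorem add_sub_mem_intrinsicInterior_of_cross {s t : ℝ}
    (hcross : (1 - s) • V 0 + s • V 2 = (1 - t) • V 1 + t • V 3)
    (ht : 0 < t) (hts : t < s) (hst : s + t < 1) :
    V 0 + V 2 - V 1 ∈ intrinsicInterior ℝ (convexHull ℝ {V 0, V 2, V 3}) ∧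
    V 0 + V 2 - V 1 ∈ intrinsicInterior ℝ (convexHull ℝ (range V)) ∧
    V 0 + V 2 - V 1 ∉ range V := by
  have ht1 : 0 < 1 - t := by linarith
  have hV1 : V 1 = AffineMap.lineMap (V 3) (AffineMap.lineMap (V 0) (V 2) s) (1 - t)⁻¹ := by
    rw [AffineMap.lineMap_apply_module, AffineMap.lineMap_apply_module, hcross]
    match_scalars
    · field_simp
    · field_simp
      ring
  have hw : V 0 + V 2 - V 1 =
      ((s - t) / (1 - t)) • V 0 + ((1 - s - t) / (1 - t)) • V 2 + (t / (1 - t)) • V 3 := by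
    rw [hV1, AffineMap.lineMap_apply_module, AffineMap.lineMap_apply_module]
    match_scalars <;> field_simp <;> ring
  have hw0 : 0 < (s - t) / (1 - t) := div_pos (by linarith) ht1
  have hw2 : 0 < (1 - s - t) / (1 - t) := div_pos (by linarith) ht1
  have hw3 : 0 < t / (1 - t) := div_pos ht ht1
  have hw1 : (s - t) / (1 - t) + (1 - s - t) / (1 - t) + t / (1 - t) = 1 := by
    field_simp
    ring
  have hT : V 0 + V 2 - V 1 ∈ intrinsicInterior ℝ (convexHull ℝ {V 0, V 2, V 3}) := by
    have hind := affineIndependent_of_forall_mem_extremePoints hVinj hext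
      (i := 0) (j := 2) (k := 3) (by decide) (by decide) (by decide)
    have hrange : range ![V 0, V 2, V 3] = {V 0, V 2, V 3} := by
      simp only [Matrix.range_cons, Matrix.range_empty, union_empty, singleton_union]
    have := hind.sum_smul_mem_intrinsicInterior_convexHull
      (w := ![(s - t) / (1 - t), (1 - s - t) / (1 - t), t / (1 - t)])
      (fun i => by fin_cases i; exacts [hw0, hw2, hw3]) (by rw [Fin.sum_univ_three]; exact hw1)
    rw [hrange, Fin.sum_univ_three] at this
    rw [hw]
    exact this
  have hV1span : V 1 ∈ affineSpan ℝ {V 0, V 2, V 3} := by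
    rw [hV1]
    refine AffineMap.lineMap_mem _ (mem_affineSpan ℝ (by simp)) ?_
    exact AffineMap.lineMap_mem _ (mem_affineSpan ℝ (by simp)) (mem_affineSpan ℝ (by simp))
  have hrange : range V = insert (V 1) {V 0, V 2, V 3} := by
    ext
    simp only [mem_range, Fin.exists_fin_succ, mem_insert_iff, mem_singleton_iff]
    grind
  refine ⟨hT, hrange ▸ intrinsicInterior_convexHull_subset_insert hV1span hT, ?_⟩
  rintro ⟨m, hm⟩
  have hQ l : V l ∈ convexHull ℝ (range V) := subset_convexHull ℝ _ (mem_range_self l)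
  obtain ⟨h0, h2, -⟩ := eq_of_mem_extremePoints_of_add_add_eq (convex_convexHull ℝ _)
    (hm ▸ hext m) (hQ 0) (hQ 2) (hQ 3) hw0 hw2 hw3 hw1 hw.symm
  exact absurd (hVinj (h0.trans h2.symm)) (by decide)

end Quadrilateral

end NormedSpace

theorem exists_lattice_point_of_cross {d : ℕ} {v : Fin 4 → Fin d → ℤ} {V : Fin 4 → Fin d → ℝ}
    (hV : ∀ i j, V i j = (v i j : ℝ)) (hVinj : Function.Injective V)
    (hext : ∀ i, V i ∈ (convexHull ℝ (range V)).extremePoints ℝ) {i j k l : Fin 4}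
    (hijkl : Function.Bijective ![i, j, k, l]) {s t : ℝ}
    (hcross : (1 - s) • V i + s • V k = (1 - t) • V j + t • V l)
    (ht : 0 < t) (hts : t < s) (hst : s + t < 1) :
    ∃ w : Fin d → ℝ, IsLatticePt d w ∧
      w ∈ intrinsicInterior ℝ (convexHull ℝ (range V)) ∧
      w ∉ range V ∧
      ∃ i j l : Fin 4, i ≠ j ∧ i ≠ l ∧ j ≠ l ∧
        w ∈ intrinsicInterior ℝ (convexHull ℝ {V i, V j, V l}) := by
  have hrange : range (V ∘ ![i, j, k, l]) = range V := hijkl.surjective.range_comp V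
  obtain ⟨hT, hQ, hnot⟩ := add_sub_mem_intrinsicInterior_of_cross (V := V ∘ ![i, j, k, l])
    (hVinj.comp hijkl.injective) (hrange ▸ fun m => hext _) hcross ht hts hst
  have hne {a b : Fin 4} (hab : a ≠ b) : ![i, j, k, l] a ≠ ![i, j, k, l] b :=
    hijkl.injective.ne hab
  exact ⟨_, fun m => ⟨v i m + v k m - v j m, by simp [hV]⟩, hrange ▸ hQ, hrange ▸ hnot,
    i, k, l, hne (a := 0) (b := 2) (by decide), hne (a := 0) (b := 3) (by decide),
    hne (a := 2) (b := 3) (by decide), hT⟩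

theorem quadrilateral_has_interior_lattice_point_general (d : ℕ) (v : Fin 4 → Fin d → ℤ)
    (V : Fin 4 → Fin d → ℝ) (hV : ∀ i j, V i j = (v i j : ℝ))
    (hVinj : Function.Injective V)
    (hext : ∀ i, V i ∈ Set.extremePoints ℝ (convexHull ℝ (Set.range V)))
    (hcyc : (segment ℝ (V 0) (V 2) ∩ segment ℝ (V 1) (V 3)).Nonempty)
    (hpar1 : ¬ ∃ c : ℝ, V 1 - V 0 = c • (V 3 - V 2))
    (hpar2 : ¬ ∃ c : ℝ, V 2 - V 1 = c • (V 0 - V 3)) :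
    ∃ w : Fin d → ℝ, IsLatticePt d w ∧
      w ∈ intrinsicInterior ℝ (convexHull ℝ (Set.range V)) ∧
      w ∉ Set.range V ∧
      ∃ i j l : Fin 4, i ≠ j ∧ i ≠ l ∧ j ≠ l ∧
        w ∈ intrinsicInterior ℝ (convexHull ℝ {V i, V j, V l}) := by
  obtain ⟨s, t, ⟨hs0, hs1⟩, ⟨ht0, ht1⟩, hcross⟩ :=
    exists_cross_params_of_segment_inter_nonempty hVinj hext hcyc
  have hst : s ≠ t := fun h => hpar1 (exists_sub_eq_smul_sub_of_cross_of_eq h hs1 hcross)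
  have hst1 : s + t ≠ 1 := fun h =>
    hpar2 (exists_sub_eq_smul_sub_of_cross_of_add_eq_one h hs0 hcross)
  rcases hst.lt_or_gt with h | h <;> rcases hst1.lt_or_gt with h' | h'
  · exact exists_lattice_point_of_cross hV hVinj hext (i := 1) (j := 0) (k := 3) (l := 2)
      (by decide) hcross.symm hs0 h (by linarith)
  · exact exists_lattice_point_of_cross hV hVinj hext (i := 0) (j := 3) (k := 2) (l := 1)
      (s := s) (t := 1 - t) (by decide) (by linear_combination (norm := module) hcross)
      (by linarith) (by linarith) (by linarith)
  · exact exists_lattice_point_of_cross hV hVinj hext (i := 0) (j := 1) (k := 2) (l := 3)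
      (by decide) hcross ht0 h h'
  · exact exists_lattice_point_of_cross hV hVinj hext (i := 1) (j := 2) (k := 3) (l := 0)
      (s := t) (t := 1 - s) (by decide) (by linear_combination (norm := module) hcross.symm)
      (by linarith) (by linarith) (by linarith)

/-- A planar lattice quadrilateral (vertices `V 0, V 1, V 2, V 3` in cyclic
order, encoded by the crossing of the diagonals) with no pair of parallel opposite edges
contains a lattice point in its relative interior other than its vertices; moreover such
a point can be found in the relative interior of the convex hull of three of the
vertices. -/
theorem quadrilateral_has_interior_lattice_point (d : ℕ) (v : Fin 4 → Fin d → ℤ)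
    (V : Fin 4 → Fin d → ℝ) (hV : ∀ i j, V i j = (v i j : ℝ))
    (hVinj : Function.Injective V)
    (hcop : Coplanar ℝ (Set.range V))
    (hext : ∀ i, V i ∈ Set.extremePoints ℝ (convexHull ℝ (Set.range V)))
    (hcyc : (segment ℝ (V 0) (V 2) ∩ segment ℝ (V 1) (V 3)).Nonempty)
    (hpar1 : ¬ ∃ c : ℝ, V 1 - V 0 = c • (V 3 - V 2))
    (hpar2 : ¬ ∃ c : ℝ, V 2 - V 1 = c • (V 0 - V 3)) :
    ∃ w : Fin d → ℝ, IsLatticePt d w ∧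
      w ∈ intrinsicInterior ℝ (convexHull ℝ (Set.range V)) ∧
      w ∉ Set.range V ∧
      ∃ i j l : Fin 4, i ≠ j ∧ i ≠ l ∧ j ≠ l ∧
        w ∈ intrinsicInterior ℝ (convexHull ℝ {V i, V j, V l}) :=
  quadrilateral_has_interior_lattice_point_general d v V hV hVinj hext hcyc hpar1 hpar2
end
end

section
/- Let d ≥ 2 and let T ⊂ ℝ^d be a clean lattice d-simplex with vertices v_1, …, v_{d+1} and at least two interior lattice points; let w_1 ≠ w_2 be lattice points in the interior of T. For each i let F_i be the facet of T opposite v_i (the convex hull of the vertices other than v_i) and T_i = conv(F_i ∪ {w_1}). Suppose w_2 lies in the topological interior of T_n for some index n. Then there exist an index m ≠ n and real numbers α and α_i (for i ∈ {1,…,d+1} with i ≠ m) such that w_2 = α·w_1 + Σ_{i ≠ m} α_i·v_i, with α + Σ_{i ≠ m} α_i = 1, α > 0, α_n < 0, and α_i ≥ 0 for all i ∉ {m, n}. -/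
open MeasureTheory Set
open scoped ENNReal

noncomputable section

/-- Let `T` be a clean lattice `d`-simplex (`d ≥ 2`) with vertices
`v 1, …, v (d+1)`, and `w₁ ≠ w₂` interior lattice points. If `w₂` lies in the interior
of `T_n = conv((V(T) \ {v n}) ∪ {w₁})`, then there are `m ≠ n` and coefficients as in
the theorem: `w₂ = α w₁ + Σ_{i ≠ m} a i • v i` with `α + Σ_{i ≠ m} a i = 1`, `α > 0`,
`a n < 0`, and `a i ≥ 0` for `i ∉ {m, n}`. -/
theorem bipyramid_coefficients (d : ℕ) (hd : 2 ≤ d)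
    (v : Fin (d + 1) → Fin d → ℝ) (hvl : ∀ i, IsLatticePt d (v i))
    (hai : AffineIndependent ℝ v)
    (T : Set (Fin d → ℝ)) (hTdef : T = convexHull ℝ (Set.range v))
    (hclean : IsClean d T)
    (w₁ w₂ : Fin d → ℝ) (hw₁ : w₁ ∈ interior T) (hw₂ : w₂ ∈ interior T)
    (hl₁ : IsLatticePt d w₁) (hl₂ : IsLatticePt d w₂) (hne : w₁ ≠ w₂)
    (n : Fin (d + 1))
    (hw₂n : w₂ ∈ interior (convexHull ℝ ((Set.range v \ {v n}) ∪ {w₁}))) :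
    ∃ m : Fin (d + 1), m ≠ n ∧
      ∃ (α : ℝ) (a : Fin (d + 1) → ℝ),
        w₂ = α • w₁ + ∑ i ∈ Finset.univ.erase m, a i • v i ∧
        α + ∑ i ∈ Finset.univ.erase m, a i = 1 ∧
        0 < α ∧ a n < 0 ∧ ∀ i, i ≠ m → i ≠ n → 0 ≤ a i := by
  classical
  have hfr : Module.finrank ℝ (Fin d → ℝ) = d := Module.finrank_fin_fun ℝ
  have hspan : affineSpan ℝ (Set.range v) = ⊤ := by
    rw [hai.affineSpan_eq_top_iff_card_eq_finrank_add_one, hfr, Fintype.card_fin]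
  let B : AffineBasis (Fin (d + 1)) ℝ (Fin d → ℝ) := ⟨v, hai, hspan⟩
  have hBcoe : ⇑B = v := rfl
  set c : Fin (d + 1) → ℝ := fun i => B.coord i w₁ with hc_def
  have hcpos : ∀ i, 0 < c i := by
    have h := hw₁
    rw [hTdef, ← hBcoe, B.interior_convexHull] at h
    exact h
  have hcsum : ∑ i, c i = 1 := B.sum_coord_apply_eq_one w₁
  have hw₁eq : w₁ = ∑ i, c i • v i := (B.linear_combination_coord_eq_self w₁).symm
  -- the family u
  set u : Fin (d + 1) → Fin d → ℝ := Function.update v n w₁ with hu_def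
  have hset : (Set.range v \ {v n}) ∪ {w₁} = Set.range u := by
    ext x
    constructor
    · rintro (⟨⟨i, rfl⟩, hx⟩ | hx)
      · have hin : i ≠ n := by
          intro h; exact hx (by rw [h]; rfl)
        exact ⟨i, by rw [hu_def, Function.update_of_ne hin]⟩
      · exact ⟨n, by rw [hu_def, Function.update_self, (mem_singleton_iff.mp hx)]⟩
    · rintro ⟨i, rfl⟩
      by_cases h : i = n
      · subst h; right; simp [hu_def]
      · left
        rw [hu_def, Function.update_of_ne h]
        exact ⟨⟨i, rfl⟩, fun hx => h (hai.injective (mem_singleton_iff.mp hx))⟩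
  rw [hset] at hw₂n
  have hspan_u : affineSpan ℝ (Set.range u) = ⊤ := by
    rw [← interior_convexHull_nonempty_iff_affineSpan_eq_top]
    exact ⟨w₂, hw₂n⟩
  have hu_ind : AffineIndependent ℝ u := by
    rw [affineIndependent_iff_finrank_vectorSpan_eq ℝ u (Fintype.card_fin (d + 1))]
    rw [AffineSubspace.vectorSpan_eq_top_of_affineSpan_eq_top ℝ _ _ hspan_u, finrank_top, hfr]
  let B' : AffineBasis (Fin (d + 1)) ℝ (Fin d → ℝ) := ⟨u, hu_ind, hspan_u⟩
  have hB'coe : ⇑B' = u := rfl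
  set e : Fin (d + 1) → ℝ := fun i => B'.coord i w₂ with he_def
  have hepos : ∀ i, 0 < e i := by
    have h := hw₂n
    rw [← hB'coe, B'.interior_convexHull] at h
    exact h
  have hesum : ∑ i, e i = 1 := B'.sum_coord_apply_eq_one w₂
  have hw₂eq : w₂ = ∑ i, e i • u i := (B'.linear_combination_coord_eq_self w₂).symm
  set W : Fin (d + 1) → ℝ := fun i => e n * c i + (if i = n then 0 else e i) with hW_def
  have hW2 : w₂ = ∑ i, W i • v i := by
    have h1 : w₂ = e n • w₁ + ∑ i ∈ Finset.univ.erase n, e i • v i := by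
      rw [hw₂eq, ← Finset.add_sum_erase _ _ (Finset.mem_univ n)]
      congr 1
      · rw [hu_def, Function.update_self]
      · exact Finset.sum_congr rfl fun i hi => by
          rw [hu_def, Function.update_of_ne (Finset.ne_of_mem_erase hi)]
    rw [h1, hw₁eq, Finset.smul_sum,
      ← Finset.add_sum_erase _ (fun i => W i • v i) (Finset.mem_univ n),
      ← Finset.add_sum_erase _ (fun i => e n • (c i • v i)) (Finset.mem_univ n),
      add_assoc, ← Finset.sum_add_distrib]
    congr 1
    · rw [smul_smul]
      congr 1
      simp [hW_def]
    · refine Finset.sum_congr rfl fun i hi => ?_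
      have hin : i ≠ n := Finset.ne_of_mem_erase hi
      rw [smul_smul, ← add_smul]
      congr 1
      simp [hW_def, hin]
  have hWsum : ∑ i, W i = 1 := by
    rw [hW_def]
    rw [Finset.sum_add_distrib, ← Finset.mul_sum, hcsum,
      ← Finset.add_sum_erase _ (fun i => if i = n then 0 else e i) (Finset.mem_univ n)]
    rw [if_pos rfl,
      Finset.sum_congr rfl (fun i hi => if_neg (Finset.ne_of_mem_erase hi)),
      Finset.sum_erase_eq_sub (Finset.mem_univ n), hesum]
    ring
  have hWn : W n = e n * c n := by simp [hW_def]
  have hrn : W n / c n = e n := by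
    rw [hWn, mul_div_assoc, div_self (ne_of_gt (hcpos n)), mul_one]
  have hrgt : ∀ i, i ≠ n → W n / c n < W i / c i := by
    intro i hi
    have hWi : W i = e n * c i + e i := by simp [hW_def, hi]
    rw [hrn, hWi, add_div, mul_div_assoc, div_self (ne_of_gt (hcpos i)), mul_one]
    exact lt_add_of_pos_right _ (div_pos (hepos i) (hcpos i))
  have hnt : Nontrivial (Fin (d + 1)) := Fin.nontrivial_iff_two_le.mpr (by omega)
  obtain ⟨j, hjne⟩ := exists_ne n
  obtain ⟨m, hm_mem, hm_min⟩ := Finset.exists_min_image (Finset.univ.erase n)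
    (fun i => W i / c i) ⟨j, Finset.mem_erase.mpr ⟨hjne, Finset.mem_univ j⟩⟩
  have hmn : m ≠ n := Finset.ne_of_mem_erase hm_mem
  refine ⟨m, hmn, W m / c m, fun i => W i - (W m / c m) * c i, ?_, ?_, ?_, ?_, ?_⟩
  · have ham : (fun i => (W i - (W m / c m) * c i) • v i) m = 0 := by
      simp only [div_mul_cancel₀ _ (ne_of_gt (hcpos m)), sub_self, zero_smul]
    rw [Finset.sum_erase (f := fun i => (W i - (W m / c m) * c i) • v i) _ ham,
      hw₁eq, Finset.smul_sum, ← Finset.sum_add_distrib, hW2]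
    refine Finset.sum_congr rfl fun i _ => ?_
    rw [smul_smul, ← add_smul]
    congr 1
    ring
  · have ham : (fun i => W i - (W m / c m) * c i) m = 0 := by
      simp only [div_mul_cancel₀ _ (ne_of_gt (hcpos m)), sub_self]
    rw [Finset.sum_erase (f := fun i => W i - (W m / c m) * c i) _ ham]
    have : ∑ i, (W i - (W m / c m) * c i) = ∑ i, W i - (W m / c m) * ∑ i, c i := by
      rw [Finset.mul_sum, Finset.sum_sub_distrib]
    rw [this, hWsum, hcsum]
    ring
  · have := hrgt m hmn
    rw [hrn] at this
    exact lt_trans (hepos n) this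
  · have h := hrgt m hmn
    have : W n < (W m / c m) * c n := by
      rw [← div_lt_iff₀ (hcpos n)]
      exact h
    linarith
  · intro i him hin
    have h := hm_min i (Finset.mem_erase.mpr ⟨hin, Finset.mem_univ i⟩)
    have : (W m / c m) * c i ≤ W i := by
      rw [← le_div_iff₀ (hcpos i)]
      exact h
    linarith
end
end

section
/- Let P ⊂ ℝ^d be a clean lattice d-polytope whose interior contains at least one lattice point, and let 𝒯 be a lattice triangulation of P. Let T ∈ 𝒯, let S be the convex hull of j+1 of the vertices of T (a j-face of T, 0 ≤ j ≤ d), and suppose some vertex of S is a lattice point in the interior of P. Then S is contained in at least d + 1 − j members of 𝒯. -/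
open MeasureTheory Set
open scoped ENNReal

noncomputable section

/-- The vertex set of a triangulation: the union of the vertex sets of its members. -/
def triVertices (d : ℕ) (𝒯 : Set (Set (Fin d → ℝ))) : Set (Fin d → ℝ) :=
  ⋃ T ∈ 𝒯, Set.extremePoints ℝ T

/-- `F` is a facet of the simplex `T`: the convex hull of all vertices of `T` but one. -/
def IsFacetOf (d : ℕ) (F T : Set (Fin d → ℝ)) : Prop :=
  ∃ u ∈ Set.extremePoints ℝ T, F = convexHull ℝ (Set.extremePoints ℝ T \ {u})

/-- A lattice triangulation of a lattice `d`-polytope `P`. -/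
def IsLatticeTriangulation (d : ℕ) (P : Set (Fin d → ℝ))
    (𝒯 : Set (Set (Fin d → ℝ))) : Prop :=
  -- a finite set of lattice d-simplices contained in P
  𝒯.Finite ∧
  (∀ T ∈ 𝒯, IsLatticeSimplex d T ∧ T ⊆ P) ∧
  -- every vertex of every member lies in P ∩ ℤ^d
  (∀ T ∈ 𝒯, ∀ x ∈ Set.extremePoints ℝ T, x ∈ P ∧ IsLatticePt d x) ∧
  -- every vertex of P is a vertex of some member
  (∀ x ∈ Set.extremePoints ℝ P, x ∈ triVertices d 𝒯) ∧
  -- interiors are pairwise disjoint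
  (∀ T ∈ 𝒯, ∀ T' ∈ 𝒯, T ≠ T' → interior T ∩ interior T' = ∅) ∧
  -- each facet lies in the boundary of P or is a common facet of exactly two members
  (∀ T ∈ 𝒯, ∀ F, IsFacetOf d F T →
      F ⊆ frontier P ∨
        ∃ T' ∈ 𝒯, T' ≠ T ∧ IsFacetOf d F T' ∧
          ∀ T'' ∈ 𝒯, IsFacetOf d F T'' → T'' = T ∨ T'' = T') ∧
  -- no member contains a point of the vertex set other than its own vertices
  (∀ T ∈ 𝒯, ∀ x ∈ triVertices d 𝒯, x ∈ T → x ∈ Set.extremePoints ℝ T) ∧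
  -- the union of the members is P
  (⋃ T ∈ 𝒯, T) = P

/-!
Let `w ∈ V` be the vertex of `S` interior to `P`. For every vertex `u` of `T` outside `V`, the
facet of `T` opposite `u` contains `w`, so it is not in the boundary of `P` and is shared with a
second member `T_u` of the triangulation; `T_u` contains that facet and hence `S`. Distinct `u`
give distinct `T_u`: if `T_u = T_{u'}` with `u ≠ u'`, then `T_u` contains every vertex of `T`,
and since a member contains no foreign vertices of the triangulation and both are simplices with
`d + 1` vertices, `T_u = T`. Together with `T` itself this gives `(d - j) + 1` members.
-/

section AffineBasis

variable {𝕜 E ι : Type*} [Field 𝕜] [LinearOrder 𝕜] [IsStrictOrderedRing 𝕜]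
  [AddCommGroup E] [Module 𝕜 E] [Fintype ι] (b : AffineBasis ι 𝕜 E)

theorem AffineBasis.eq_of_mem_convexHull_of_coord_eq_one {x : E}
    (hx : x ∈ convexHull 𝕜 (Set.range b)) {i : ι} (hi : b.coord i x = 1) : x = b i := by
  classical
  rw [b.convexHull_eq_nonneg_coord] at hx
  refine b.ext_elem fun k => ?_
  rw [b.coord_apply]
  split_ifs with hki
  · rwa [hki]
  · have : b.coord k x + b.coord i x ≤ 1 := by
      rw [← b.sum_coord_apply_eq_one x]
      exact Finset.add_le_sum (fun l _ => hx l) (Finset.mem_univ k) (Finset.mem_univ i) hki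
    linarith [hx k]

theorem AffineBasis.extremePoints_convexHull_s15 :
    (convexHull 𝕜 (Set.range b)).extremePoints 𝕜 = Set.range b := by
  refine extremePoints_convexHull_subset.antisymm ?_
  rintro _ ⟨i, rfl⟩
  rw [(convex_convexHull 𝕜 _).mem_extremePoints_iff_convex_sdiff]
  refine ⟨subset_convexHull 𝕜 _ ⟨i, rfl⟩, ?_⟩
  have hsdiff : convexHull 𝕜 (Set.range b) \ {b i}
      = convexHull 𝕜 (Set.range b) ∩ b.coord i ⁻¹' Set.Iio 1 := by
    ext x
    refine ⟨fun ⟨hx, hxi⟩ => ⟨hx, ?_⟩, fun ⟨hx, hlt⟩ => ⟨hx, ?_⟩⟩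
    · have hle : b.coord i x ≤ 1 := by
        rw [← b.sum_coord_apply_eq_one x]
        rw [b.convexHull_eq_nonneg_coord] at hx
        exact Finset.single_le_sum (fun k _ => hx k) (Finset.mem_univ i)
      exact hle.lt_of_ne fun h => hxi (b.eq_of_mem_convexHull_of_coord_eq_one hx h)
    · rintro rfl
      simp at hlt
  rw [hsdiff]
  exact (convex_convexHull 𝕜 _).inter ((convex_Iio 1).affine_preimage (b.coord i))

end AffineBasis

namespace IsLatticeSimplex

variable {d : ℕ} {T : Set (Fin d → ℝ)}

theorem exists_affineBasis_s15 (hT : IsLatticeSimplex d T) :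
    ∃ b : AffineBasis (Fin (d + 1)) ℝ (Fin d → ℝ), T = convexHull ℝ (Set.range b) := by
  obtain ⟨v, hv, rfl⟩ := hT
  have hspan : affineSpan ℝ (Set.range fun i j => ((v i j : ℤ) : ℝ)) = ⊤ := by
    rw [hv.affineSpan_eq_top_iff_card_eq_finrank_add_one]
    simp
  exact ⟨⟨_, hv, hspan⟩, rfl⟩

theorem convexHull_extremePoints (hT : IsLatticeSimplex d T) :
    convexHull ℝ (T.extremePoints ℝ) = T := by
  obtain ⟨b, rfl⟩ := hT.exists_affineBasis_s15
  rw [b.extremePoints_convexHull_s15]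

theorem finite_extremePoints (hT : IsLatticeSimplex d T) : (T.extremePoints ℝ).Finite := by
  obtain ⟨b, rfl⟩ := hT.exists_affineBasis_s15
  rw [b.extremePoints_convexHull_s15]
  exact Set.finite_range b

theorem ncard_extremePoints (hT : IsLatticeSimplex d T) : (T.extremePoints ℝ).ncard = d + 1 := by
  obtain ⟨b, rfl⟩ := hT.exists_affineBasis_s15
  rw [b.extremePoints_convexHull_s15, Set.ncard_range_of_injective b.ind.injective, Nat.card_fin]

end IsLatticeSimplex

theorem Set.subset_of_convexHull_sdiff_singleton_subset {𝕜 E : Type*} [Semiring 𝕜]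
    [PartialOrder 𝕜] [AddCommMonoid E] [Module 𝕜 E] {A X : Set E} {u u' : E} (huu' : u ≠ u')
    (hu : convexHull 𝕜 (A \ {u}) ⊆ X) (hu' : convexHull 𝕜 (A \ {u'}) ⊆ X) : A ⊆ X := by
  intro x hx
  by_cases hxu : x = u
  · exact hu' (subset_convexHull 𝕜 _ ⟨hx, hxu ▸ huu'⟩)
  · exact hu (subset_convexHull 𝕜 _ ⟨hx, hxu⟩)

namespace IsLatticeTriangulation

variable {d : ℕ} {P : Set (Fin d → ℝ)} {𝒯 : Set (Set (Fin d → ℝ))} {T T' : Set (Fin d → ℝ)}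

theorem isLatticeSimplex (h𝒯 : IsLatticeTriangulation d P 𝒯) (hT : T ∈ 𝒯) :
    IsLatticeSimplex d T :=
  (h𝒯.2.1 T hT).1

theorem eq_of_extremePoints_subset (h𝒯 : IsLatticeTriangulation d P 𝒯) (hT : T ∈ 𝒯)
    (hT' : T' ∈ 𝒯) (h : T.extremePoints ℝ ⊆ T') : T = T' := by
  have hsub : T.extremePoints ℝ ⊆ T'.extremePoints ℝ := fun x hx =>
    h𝒯.2.2.2.2.2.2.1 T' hT' x (Set.mem_biUnion hT hx) (h hx)
  have heq := Set.eq_of_subset_of_ncard_le hsub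
    (by rw [(h𝒯.isLatticeSimplex hT).ncard_extremePoints,
      (h𝒯.isLatticeSimplex hT').ncard_extremePoints])
    (h𝒯.isLatticeSimplex hT').finite_extremePoints
  rw [← (h𝒯.isLatticeSimplex hT).convexHull_extremePoints,
    ← (h𝒯.isLatticeSimplex hT').convexHull_extremePoints, heq]

theorem exists_ne_convexHull_sdiff_singleton_subset
    (h𝒯 : IsLatticeTriangulation d P 𝒯) (hT : T ∈ 𝒯) {u w : Fin d → ℝ}
    (hu : u ∈ T.extremePoints ℝ) (hw : w ∈ T.extremePoints ℝ) (hwu : w ≠ u)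
    (hwP : w ∈ interior P) :
    ∃ T' ∈ 𝒯, T' ≠ T ∧ convexHull ℝ (T.extremePoints ℝ \ {u}) ⊆ T' := by
  have hwF : w ∈ convexHull ℝ (T.extremePoints ℝ \ {u}) := subset_convexHull ℝ _ ⟨hw, hwu⟩
  rcases h𝒯.2.2.2.2.2.1 T hT _ ⟨u, hu, rfl⟩ with hfront | ⟨T', hT', hT'T, ⟨a, -, hF⟩, -⟩
  · exact absurd hwP (hfront hwF).2
  · refine ⟨T', hT', hT'T, hF ▸ ?_⟩
    exact (convexHull_mono Set.sdiff_subset).trans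
      (h𝒯.isLatticeSimplex hT').convexHull_extremePoints.subset

end IsLatticeTriangulation

theorem face_in_many_simplices_general (d j : ℕ) (P : Set (Fin d → ℝ))
    (𝒯 : Set (Set (Fin d → ℝ))) (h𝒯 : IsLatticeTriangulation d P 𝒯)
    (T : Set (Fin d → ℝ)) (hT : T ∈ 𝒯)
    (S V : Set (Fin d → ℝ))
    (hV : V ⊆ Set.extremePoints ℝ T) (hVcard : V.ncard = j + 1)
    (hS : S = convexHull ℝ V)
    (hw : ∃ w ∈ V, IsLatticePt d w ∧ w ∈ interior P) :
    d + 1 - j ≤ {T' ∈ 𝒯 | S ⊆ T'}.ncard := by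
  obtain ⟨w, hwV, -, hwP⟩ := hw
  have hTs := h𝒯.isLatticeSimplex hT
  have hST : S ⊆ T := hS ▸ hTs.convexHull_extremePoints ▸ convexHull_mono hV
  have hSF : ∀ u ∈ T.extremePoints ℝ \ V, S ⊆ convexHull ℝ (T.extremePoints ℝ \ {u}) :=
    fun u hu => hS ▸ convexHull_mono fun x hx => ⟨hV hx, fun h => hu.2 (h ▸ hx)⟩
  choose! g hg𝒯 hgT hFg using fun u (hu : u ∈ T.extremePoints ℝ \ V) =>
    h𝒯.exists_ne_convexHull_sdiff_singleton_subset hT hu.1 (hV hwV)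
      (fun h => hu.2 (h ▸ hwV)) hwP
  have hinj : Set.InjOn g (T.extremePoints ℝ \ V) := fun u hu u' hu' hgu => by
    by_contra huu'
    refine hgT u hu (h𝒯.eq_of_extremePoints_subset hT (hg𝒯 u hu) ?_).symm
    exact Set.subset_of_convexHull_sdiff_singleton_subset huu' (hFg u hu) (hgu ▸ hFg u' hu')
  have hTmem : T ∈ {T' ∈ 𝒯 | S ⊆ T'} := ⟨hT, hST⟩
  have hfin : {T' ∈ 𝒯 | S ⊆ T'}.Finite := h𝒯.1.subset (Set.sep_subset _ _)
  have hcount := Set.ncard_le_ncard_of_injOn (t := {T' ∈ 𝒯 | S ⊆ T'} \ {T}) g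
    (fun u hu => ⟨⟨hg𝒯 u hu, (hSF u hu).trans (hFg u hu)⟩, hgT u hu⟩) hinj hfin.sdiff
  rw [Set.ncard_sdiff hV (hTs.finite_extremePoints.subset hV), hTs.ncard_extremePoints, hVcard,
    Set.ncard_sdiff_singleton_of_mem hTmem] at hcount
  have hpos : 0 < {T' ∈ 𝒯 | S ⊆ T'}.ncard := (Set.ncard_pos hfin).2 ⟨T, hTmem⟩
  omega

/-- In a lattice triangulation `𝒯` of a clean, non-empty lattice
`d`-polytope `P`, a `j`-face `S` of a member `T` having a vertex which is an interior
lattice point of `P` is contained in at least `d + 1 - j` members of `𝒯`. -/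
theorem face_in_many_simplices (d j : ℕ) (hj : j ≤ d) (P : Set (Fin d → ℝ))
    (hP : IsLatticePolytope d P) (hclean : IsClean d P)
    (hne : ∃ x ∈ interior P, IsLatticePt d x)
    (𝒯 : Set (Set (Fin d → ℝ))) (h𝒯 : IsLatticeTriangulation d P 𝒯)
    (T : Set (Fin d → ℝ)) (hT : T ∈ 𝒯)
    (S V : Set (Fin d → ℝ))
    (hV : V ⊆ Set.extremePoints ℝ T) (hVcard : V.ncard = j + 1)
    (hS : S = convexHull ℝ V)
    (hw : ∃ w ∈ V, IsLatticePt d w ∧ w ∈ interior P) :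
    d + 1 - j ≤ {T' ∈ 𝒯 | S ⊆ T'}.ncard :=
  face_in_many_simplices_general d j P 𝒯 h𝒯 T hT S V hV hVcard hS hw
end
end

section
/- Let p, q be integers with 2 ≤ p ≤ q and gcd(p, q + 1) = 1, and let Δ_{p,q} = conv{(−1, 0), (0, q), (p, −1)} ⊂ ℝ². Then the lattice points in the topological interior of Δ_{p,q} are not all collinear: there is no line in ℝ² containing every lattice point of the interior of Δ_{p,q}. -/
open MeasureTheory Set
open scoped ENNReal

noncomputable section

/-! The triangle contains `(0,0)`, `(1,0)` and `(0,1)` in its interior as soon as `p, q ≥ 2`.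
Interior membership is tested with barycentric coordinates, which in the plane are ratios of
orientation determinants (Cramer's rule). -/

theorem AffineBasis.affineCombination_mem_interior_convexHull {ι E : Type*} [Fintype ι]
    [NormedAddCommGroup E] [NormedSpace ℝ E] [FiniteDimensional ℝ E] (b : AffineBasis ι ℝ E)
    {w : ι → ℝ} (hw : ∑ i, w i = 1) (hpos : ∀ i, 0 < w i) :
    Finset.univ.affineCombination ℝ b w ∈ interior (convexHull ℝ (range b)) := by
  rw [b.interior_convexHull]
  intro i
  rw [b.coord_apply_combination_of_mem (Finset.mem_univ i) hw]
  exact hpos i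

/-- Twice the signed area of the triangle `a b c`; positive iff it is oriented counterclockwise. -/
def orient (a b c : Fin 2 → ℝ) : ℝ :=
  (b 0 - a 0) * (c 1 - a 1) - (b 1 - a 1) * (c 0 - a 0)

theorem not_collinear_of_orient_ne_zero {a b c : Fin 2 → ℝ} (h : orient a b c ≠ 0) :
    ¬ Collinear ℝ ({a, b, c} : Set (Fin 2 → ℝ)) := by
  intro hcol
  obtain ⟨v, hv⟩ := (collinear_iff_of_mem (Set.mem_insert a _)).mp hcol
  obtain ⟨r, rfl⟩ := hv b (by simp)
  obtain ⟨s, rfl⟩ := hv c (by simp)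
  apply h
  simp only [orient, vadd_eq_add, Pi.add_apply, Pi.smul_apply, smul_eq_mul]
  ring

theorem affineIndependent_of_orient_ne_zero {a b c : Fin 2 → ℝ} (h : orient a b c ≠ 0) :
    AffineIndependent ℝ ![a, b, c] :=
  affineIndependent_iff_not_collinear_set.mpr (not_collinear_of_orient_ne_zero h)

theorem mem_interior_convexHull_of_orient_pos {a b c x : Fin 2 → ℝ} (habc : 0 < orient a b c)
    (ha : 0 < orient x b c) (hb : 0 < orient a x c) (hc : 0 < orient a b x) :
    x ∈ interior (convexHull ℝ ({a, b, c} : Set (Fin 2 → ℝ))) := by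
  have hind := affineIndependent_of_orient_ne_zero habc.ne'
  let B : AffineBasis (Fin 3) ℝ (Fin 2 → ℝ) :=
    ⟨![a, b, c], hind, hind.affineSpan_eq_top_iff_card_eq_finrank_add_one.mpr (by simp)⟩
  have hrange : range B = {a, b, c} := by
    change range ![a, b, c] = _
    simp only [Matrix.range_cons, Matrix.range_empty, union_empty, singleton_union]
  set w : Fin 3 → ℝ := ![orient x b c, orient a x c, orient a b x] / fun _ => orient a b c
  have hw : ∑ i, w i = 1 := by
    simp only [w, Fin.sum_univ_three, Pi.div_apply]
    field_simp
    simp only [orient, Matrix.cons_val_zero, Matrix.cons_val_one, Matrix.cons_val_two,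
      Matrix.head_cons, Matrix.tail_cons]
    ring
  have hx : Finset.univ.affineCombination ℝ B w = x := by
    rw [Finset.affineCombination_eq_linear_combination _ _ _ hw, Fin.sum_univ_three]
    funext j
    change w 0 * a j + w 1 * b j + w 2 * c j = x j
    simp only [w, Pi.div_apply]
    field_simp
    fin_cases j <;>
      simp only [orient, Matrix.cons_val_zero, Matrix.cons_val_one, Matrix.cons_val_two,
        Matrix.head_cons, Matrix.tail_cons, Fin.zero_eta, Fin.mk_one] <;> ring
  rw [← hrange, ← hx]
  refine B.affineCombination_mem_interior_convexHull hw fun i => ?_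
  fin_cases i <;> exact div_pos (by assumption) habc

theorem isLatticePt_two (m n : ℤ) : IsLatticePt 2 ![(m : ℝ), (n : ℝ)] := by
  intro i
  fin_cases i
  exacts [⟨m, rfl⟩, ⟨n, rfl⟩]

theorem interior_points_not_collinear_general (p q : ℤ) (hp : 2 ≤ p) (hpq : p ≤ q) :
    ¬ Collinear ℝ {x ∈ interior (convexHull ℝ
        {![(-1 : ℝ), 0], ![0, (q : ℝ)], ![(p : ℝ), -1]}) | IsLatticePt 2 x} := by
  have hp' : (2 : ℝ) ≤ p := by exact_mod_cast hp
  have hq' : (2 : ℝ) ≤ q := by exact_mod_cast hp.trans hpq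
  have hmem : ∀ m n : ℤ, 0 < orient ![m, n] ![p, -1] ![0, q] →
      0 < orient ![-1, 0] ![m, n] ![0, q] → 0 < orient ![-1, 0] ![p, -1] ![m, n] →
      ![(m : ℝ), n] ∈ {x ∈ interior (convexHull ℝ
        {![(-1 : ℝ), 0], ![0, (q : ℝ)], ![(p : ℝ), -1]}) | IsLatticePt 2 x} := by
    intro m n h₁ h₂ h₃
    refine ⟨?_, isLatticePt_two m n⟩
    rw [pair_comm]
    refine mem_interior_convexHull_of_orient_pos ?_ h₁ h₂ h₃
    simp only [orient, Matrix.cons_val_zero, Matrix.cons_val_one]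
    nlinarith
  have h00 := hmem 0 0
  have h10 := hmem 1 0
  have h01 := hmem 0 1
  simp only [orient, Matrix.cons_val_zero, Matrix.cons_val_one,
    Int.cast_zero, Int.cast_one] at h00 h10 h01
  refine fun hcol => not_collinear_of_orient_ne_zero (a := ![0, 0]) (b := ![1, 0])
    (c := ![0, 1]) (by norm_num [orient]) (hcol.subset ?_)
  rintro x (rfl | rfl | rfl)
  · exact h00 (by nlinarith) (by nlinarith) (by nlinarith)
  · exact h10 (by nlinarith) (by nlinarith) (by nlinarith)
  · exact h01 (by nlinarith) (by nlinarith) (by nlinarith)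

/-- For integers `2 ≤ p ≤ q` with `gcd(p, q+1) = 1`, the interior lattice
points of the triangle `Δ_{p,q} = conv{(-1,0), (0,q), (p,-1)}` are not all collinear. -/
theorem interior_points_not_collinear (p q : ℤ) (hp : 2 ≤ p) (hpq : p ≤ q)
    (h : Int.gcd p (q + 1) = 1) :
    ¬ Collinear ℝ {x ∈ interior (convexHull ℝ
        {![(-1 : ℝ), 0], ![0, (q : ℝ)], ![(p : ℝ), -1]}) | IsLatticePt 2 x} :=
  interior_points_not_collinear_general p q hp hpq
end
end
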